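/- arXiv:0902.1106 — 7 statements merged into one kernel-verified Lean document; each statement's English description precedes it below -/
import Mathlib

section
/- Let λ be a k×ℓ bounded partition and λ̂ an ℓ×k bounded partition, with n = k + ℓ − 1. Then λ̂ is the conjugate partition of λ if and only if the sets {λ⁺_i : 1 ≤ i ≤ k} and {λ̂⁻_j : 1 ≤ j ≤ ℓ} are complementary subsets of {0, 1, …, n}, where λ⁺_i = ℓ − 1 − λ_i + i and λ̂⁻_j = λ̂_{ℓ+1−j} + j − 1. -/
open Finset

/-- A lower subset of `Fin k` is characterized by its cardinality. -/
lemma aux_lower_iff_lt_card {k : ℕ} (S : Finset (Fin k))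
    (h : ∀ ⦃i i' : Fin k⦄, i ≤ i' → i' ∈ S → i ∈ S) (i : Fin k) :
    i ∈ S ↔ (i : ℕ) < S.card := by
  constructor
  · intro hi
    have hsub : Finset.Iic i ⊆ S := fun x hx => h (Finset.mem_Iic.1 hx) hi
    have := Finset.card_le_card hsub
    have hIic : (Finset.Iic i).card = (i : ℕ) + 1 := Fin.card_Iic i
    omega
  · intro hi
    by_contra hns
    have hsub : S ⊆ Finset.Iio i := by
      intro x hx
      rw [Finset.mem_Iio]
      by_contra hxi
      exact hns (h (le_of_not_gt hxi) hx)
    have := Finset.card_le_card hsub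
    rw [Fin.card_Iio] at this
    omega

/-- Forward direction of the main theorem, stated as a standalone lemma. -/
lemma aux_forward (k ℓ : ℕ) (l : Fin k → ℕ) (m : Fin ℓ → ℕ)
    (hl₁ : Antitone l) (hl₂ : ∀ i, l i ≤ ℓ)
    (hm₁ : Antitone m) (hm₂ : ∀ j, m j ≤ k)
    (hconj : ∀ j : Fin ℓ, m j = (Finset.univ.filter fun i : Fin k => (j : ℕ) + 1 ≤ l i).card) :
    (Disjoint (Set.range fun i : Fin k => ℓ + (i : ℕ) - l i)
        (Set.range fun j : Fin ℓ => m j.rev + (j : ℕ)) ∧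
      (Set.range fun i : Fin k => ℓ + (i : ℕ) - l i) ∪
          (Set.range fun j : Fin ℓ => m j.rev + (j : ℕ)) =
        {x : ℕ | x < k + ℓ}) := by
  have key : ∀ (j : Fin ℓ) (i : Fin k), (i : ℕ) < m j ↔ (j : ℕ) + 1 ≤ l i := by
    intro j i
    rw [hconj j]
    have := aux_lower_iff_lt_card (Finset.univ.filter fun i : Fin k => (j : ℕ) + 1 ≤ l i)
      (fun i i' hii hmem => by
        simp only [Finset.mem_filter, Finset.mem_univ, true_and] at hmem ⊢
        exact hmem.trans (hl₁ hii)) i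
    simpa using this.symm
  have hdisj : Disjoint (Set.range fun i : Fin k => ℓ + (i : ℕ) - l i)
      (Set.range fun j : Fin ℓ => m j.rev + (j : ℕ)) := by
    rw [Set.disjoint_left]
    rintro x ⟨i, rfl⟩ ⟨j, hj⟩
    set jr := j.rev with hjr
    have hj' : ℓ + (i : ℕ) - l i = m jr + (j : ℕ) := hj.symm
    have hrev : (j : ℕ) = ℓ - 1 - (jr : ℕ) := by
      have := Fin.val_rev j
      have := j.isLt
      have := jr.isLt
      omega
    have h1 := key jr i
    have h2 := hl₂ i
    have h3 := j.isLt
    have h4 := jr.isLt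
    have h5 := i.isLt
    by_cases hc : (jr : ℕ) + 1 ≤ l i
    · have hlt : (i : ℕ) < m jr := h1.2 hc
      omega
    · have hge : m jr ≤ (i : ℕ) := by
        by_contra hcon
        exact hc (h1.1 (by omega))
      omega
  have hf : StrictMono fun i : Fin k => ℓ + (i : ℕ) - l i := by
    intro i i' hii
    have := hl₁ hii.le
    have := hl₂ i
    have := hl₂ i'
    have : (i : ℕ) < (i' : ℕ) := hii
    simp only
    omega
  have hg : StrictMono fun j : Fin ℓ => m j.rev + (j : ℕ) := by
    intro j j' hjj
    have hr : j'.rev ≤ j.rev := Fin.rev_le_rev.2 hjj.le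
    have := hm₁ hr
    have : (j : ℕ) < (j' : ℕ) := hjj
    simp only
    omega
  refine ⟨hdisj, ?_⟩
  -- pass to finsets
  have hA : (Set.range fun i : Fin k => ℓ + (i : ℕ) - l i) =
      ↑(Finset.univ.image fun i : Fin k => ℓ + (i : ℕ) - l i) := by
    rw [Finset.coe_image, Finset.coe_univ, Set.image_univ]
  have hB : (Set.range fun j : Fin ℓ => m j.rev + (j : ℕ)) =
      ↑(Finset.univ.image fun j : Fin ℓ => m j.rev + (j : ℕ)) := by
    rw [Finset.coe_image, Finset.coe_univ, Set.image_univ]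
  set A := Finset.univ.image fun i : Fin k => ℓ + (i : ℕ) - l i with hAdef
  set B := Finset.univ.image fun j : Fin ℓ => m j.rev + (j : ℕ) with hBdef
  have hcardA : A.card = k := by
    rw [hAdef, Finset.card_image_of_injective _ hf.injective, Finset.card_univ, Fintype.card_fin]
  have hcardB : B.card = ℓ := by
    rw [hBdef, Finset.card_image_of_injective _ hg.injective, Finset.card_univ, Fintype.card_fin]
  have hdisjF : Disjoint A B := by
    rw [← Finset.disjoint_coe, ← hA, ← hB]
    exact hdisj
  have hsub : A ∪ B ⊆ Finset.range (k + ℓ) := by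
    intro x hx
    rw [Finset.mem_union] at hx
    rw [Finset.mem_range]
    rcases hx with hx | hx
    · rw [hAdef, Finset.mem_image] at hx
      obtain ⟨i, _, rfl⟩ := hx
      have := i.isLt
      omega
    · rw [hBdef, Finset.mem_image] at hx
      obtain ⟨j, _, rfl⟩ := hx
      have := j.isLt
      have := hm₂ j.rev
      omega
  have hcard : (Finset.range (k + ℓ)).card ≤ (A ∪ B).card := by
    rw [Finset.card_union_of_disjoint hdisjF, hcardA, hcardB, Finset.card_range]
  have hEq : A ∪ B = Finset.range (k + ℓ) := Finset.eq_of_subset_of_card_le hsub hcard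
  rw [hA, hB, ← Finset.coe_union, hEq]
  ext x
  simp [Finset.mem_range]

/-- a `k × ℓ` bounded partition `λ` (encoded 0-based as `l : Fin k → ℕ`)
and an `ℓ × k` bounded partition `λ̂` (encoded as `m : Fin ℓ → ℕ`) are conjugate
partitions if and only if the sets `{λ⁺_i}` and `{λ̂⁻_j}` are complementary subsets of
`{0, 1, …, n}` where `n = k + ℓ − 1`.  Here `λ⁺_i = ℓ − 1 − λ_i + i`
(0-based: `ℓ + i − l i`) and `λ̂⁻_j = λ̂_{ℓ+1−j} + j − 1` (0-based: `m (rev j) + j`),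
and the conjugate is given by `λ*_j = #{i : λ_i ≥ j}`. -/
theorem conjugate_iff_complementary_subsets (k ℓ : ℕ) (l : Fin k → ℕ) (m : Fin ℓ → ℕ)
    (hl₁ : Antitone l) (hl₂ : ∀ i, l i ≤ ℓ)
    (hm₁ : Antitone m) (hm₂ : ∀ j, m j ≤ k) :
    (∀ j : Fin ℓ, m j = (Finset.univ.filter fun i : Fin k => (j : ℕ) + 1 ≤ l i).card) ↔
    (Disjoint (Set.range fun i : Fin k => ℓ + (i : ℕ) - l i)
        (Set.range fun j : Fin ℓ => m j.rev + (j : ℕ)) ∧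
      (Set.range fun i : Fin k => ℓ + (i : ℕ) - l i) ∪
          (Set.range fun j : Fin ℓ => m j.rev + (j : ℕ)) =
        {x : ℕ | x < k + ℓ}) := by
  constructor
  · exact aux_forward k ℓ l m hl₁ hl₂ hm₁ hm₂
  · rintro ⟨hdis, hun⟩
    -- the actual conjugate
    set m' : Fin ℓ → ℕ :=
      fun j => (Finset.univ.filter fun i : Fin k => (j : ℕ) + 1 ≤ l i).card with hm'def
    have hm'₁ : Antitone m' := by
      intro j j' hjj
      apply Finset.card_le_card
      intro i hi
      simp only [Finset.mem_filter, Finset.mem_univ, true_and] at hi ⊢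
      have : (j : ℕ) ≤ (j' : ℕ) := hjj
      omega
    have hm'₂ : ∀ j, m' j ≤ k := by
      intro j
      calc m' j ≤ (Finset.univ : Finset (Fin k)).card := Finset.card_filter_le _ _
        _ = k := by rw [Finset.card_univ, Fintype.card_fin]
    obtain ⟨hdis', hun'⟩ := aux_forward k ℓ l m' hl₁ hl₂ hm'₁ hm'₂ (fun j => rfl)
    -- both ranges equal the complement of range f
    have hrg : (Set.range fun j : Fin ℓ => m j.rev + (j : ℕ)) =
        (Set.range fun j : Fin ℓ => m' j.rev + (j : ℕ)) := by
      have e1 : (Set.range fun j : Fin ℓ => m j.rev + (j : ℕ)) =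
          {x : ℕ | x < k + ℓ} \ (Set.range fun i : Fin k => ℓ + (i : ℕ) - l i) := by
        rw [← hun]
        exact (Set.union_diff_cancel_left (Set.disjoint_iff.1 hdis)).symm
      have e2 : (Set.range fun j : Fin ℓ => m' j.rev + (j : ℕ)) =
          {x : ℕ | x < k + ℓ} \ (Set.range fun i : Fin k => ℓ + (i : ℕ) - l i) := by
        rw [← hun']
        exact (Set.union_diff_cancel_left (Set.disjoint_iff.1 hdis')).symm
      rw [e1, e2]
    -- strict monotonicity of both enumerations
    have hg : StrictMono fun j : Fin ℓ => m j.rev + (j : ℕ) := by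
      intro j j' hjj
      have hr : j'.rev ≤ j.rev := Fin.rev_le_rev.2 hjj.le
      have := hm₁ hr
      have : (j : ℕ) < (j' : ℕ) := hjj
      simp only
      omega
    have hg' : StrictMono fun j : Fin ℓ => m' j.rev + (j : ℕ) := by
      intro j j' hjj
      have hr : j'.rev ≤ j.rev := Fin.rev_le_rev.2 hjj.le
      have := hm'₁ hr
      have : (j : ℕ) < (j' : ℕ) := hjj
      simp only
      omega
    -- equal ranges of strictly monotone maps give equal maps
    set s : Finset ℕ := Finset.univ.image fun j : Fin ℓ => m j.rev + (j : ℕ) with hsdef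
    have hscard : s.card = ℓ := by
      rw [hsdef, Finset.card_image_of_injective _ hg.injective, Finset.card_univ,
        Fintype.card_fin]
    have hmem : ∀ j : Fin ℓ, (fun j : Fin ℓ => m j.rev + (j : ℕ)) j ∈ s := by
      intro j
      rw [hsdef]
      exact Finset.mem_image_of_mem _ (Finset.mem_univ j)
    have hmem' : ∀ j : Fin ℓ, (fun j : Fin ℓ => m' j.rev + (j : ℕ)) j ∈ s := by
      intro j
      have : ((fun j : Fin ℓ => m' j.rev + (j : ℕ)) j : ℕ) ∈
          (Set.range fun j : Fin ℓ => m' j.rev + (j : ℕ)) := Set.mem_range_self j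
      rw [← hrg] at this
      have hcs : (Set.range fun j : Fin ℓ => m j.rev + (j : ℕ)) = ↑s := by
        rw [hsdef, Finset.coe_image, Finset.coe_univ, Set.image_univ]
      rw [hcs] at this
      exact_mod_cast this
    have h1 := Finset.orderEmbOfFin_unique hscard hmem hg
    have h2 := Finset.orderEmbOfFin_unique hscard hmem' hg'
    have heq : ∀ j : Fin ℓ, m j.rev + (j : ℕ) = m' j.rev + (j : ℕ) := by
      intro j
      have ha := congrFun h1 j
      have hb := congrFun h2 j
      omega
    intro j
    have hh := heq j.rev
    rw [Fin.rev_rev] at hh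
    have hm'j : m' j = (Finset.univ.filter fun i : Fin k => (j : ℕ) + 1 ≤ l i).card := rfl
    omega
end

section
/- Suppose p ∈ P_n has n distinct finite roots r_1, …, r_n (so deg p = n and the roots are simple). Then the apolar dual of span{p}, i.e., the n-dimensional space {q ∈ P_n : γ(p, q) = 0}, is spanned by the n-th powers (z − r_1)^n, …, (z − r_n)^n. -/
open Polynomial Finset

/-- The apolar bilinear form `γ` on `P_n`, determined by
`n! γ(z^j/j!, z^m/m!) = (−1)^j` when `j + m = n` and `0` otherwise. -/
noncomputable def apolarForm (n : ℕ) (p q : Polynomial ℂ) : ℂ :=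
  ∑ j ∈ Finset.range (n + 1),
    (-1 : ℂ) ^ j / (n.choose j : ℂ) * p.coeff j * q.coeff (n - j)

lemma coeff_X_sub_C_pow' (a : ℂ) (n k : ℕ) :
    ((X - C a) ^ n).coeff k = (-a) ^ (n - k) * (n.choose k : ℂ) := by
  rw [sub_eq_add_neg, ← C_neg, coeff_X_add_C_pow]

lemma apolarForm_sum {ι : Type*} (n : ℕ) (p : Polynomial ℂ) (s : Finset ι)
    (f : ι → Polynomial ℂ) :
    apolarForm n p (∑ i ∈ s, f i) = ∑ i ∈ s, apolarForm n p (f i) := by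
  unfold apolarForm
  rw [Finset.sum_comm]
  refine Finset.sum_congr rfl fun j _ => ?_
  rw [finset_sum_coeff, Finset.mul_sum]

lemma apolarForm_smul (n : ℕ) (p : Polynomial ℂ) (c : ℂ) (q : Polynomial ℂ) :
    apolarForm n p (c • q) = c * apolarForm n p q := by
  unfold apolarForm
  rw [Finset.mul_sum]
  refine Finset.sum_congr rfl fun j _ => ?_
  rw [coeff_smul]
  simp [smul_eq_mul]
  ring

lemma apolarForm_pow_eval (n : ℕ) (p : Polynomial ℂ) (hp : p.natDegree ≤ n) (a : ℂ) :
    apolarForm n p ((X - C a) ^ n) = p.eval a := by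
  rw [eval_eq_sum_range' (Nat.lt_succ_of_le hp)]
  unfold apolarForm
  refine Finset.sum_congr rfl fun j hj => ?_
  rw [Finset.mem_range, Nat.lt_succ_iff] at hj
  rw [coeff_X_sub_C_pow', Nat.sub_sub_self hj, Nat.choose_symm hj, neg_pow]
  have hc : ((n.choose j : ℂ)) ≠ 0 := Nat.cast_ne_zero.mpr (Nat.choose_pos hj).ne'
  have h1 : (-1 : ℂ) ^ j * (-1) ^ j = 1 := by rw [← mul_pow]; norm_num
  rw [div_mul_eq_mul_div, div_mul_eq_mul_div, div_eq_iff hc]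
  linear_combination p.coeff j * a ^ j * (n.choose j : ℂ) * h1

/-- if `p ∈ P_n` has `n` distinct finite simple roots `r_1, …, r_n`
(so `p = lc·∏ (z − r_i)` with `lc ≠ 0`), then the apolar dual of `span{p}`,
namely `{q ∈ P_n : γ(p, q) = 0}`, is spanned by the top powers `(z − r_i)^n`. -/
theorem apolar_dual_of_simple_roots (n : ℕ) (r : Fin n → ℂ) (hr : Function.Injective r)
    (lc : ℂ) (hlc : lc ≠ 0) (p : Polynomial ℂ)
    (hp : p = C lc * ∏ i : Fin n, (X - C (r i))) :
    ∀ q : Polynomial ℂ,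
      (q.natDegree ≤ n ∧ apolarForm n p q = 0) ↔
        q ∈ Submodule.span ℂ (Set.range fun i : Fin n => (X - C (r i)) ^ n) := by
  -- degree of p
  have hpdeg : p.natDegree ≤ n := by
    rw [hp]
    refine natDegree_mul_le.trans ?_
    simp only [natDegree_C, zero_add]
    refine (natDegree_prod_le _ _).trans ?_
    simp [natDegree_X_sub_C]
  -- p vanishes at the roots
  have hroot : ∀ i : Fin n, p.eval (r i) = 0 := by
    intro i
    rw [hp]
    simp only [eval_mul, eval_C, eval_prod, eval_sub, eval_X]
    rw [Finset.prod_eq_zero (Finset.mem_univ i) (by ring)]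
    ring
  -- pick an extra point not among the roots
  obtain ⟨a0, ha0⟩ := ((Set.finite_range r).infinite_compl).nonempty
  have ha0' : a0 ∉ Set.range r := ha0
  set a : Fin (n + 1) → ℂ := Fin.cons a0 r with ha_def
  have ha_inj : Function.Injective a := by
    rw [ha_def, Fin.cons_injective_iff]
    exact ⟨ha0', hr⟩
  have hpa0 : p.eval a0 ≠ 0 := by
    rw [hp]
    simp only [eval_mul, eval_C, eval_prod, eval_sub, eval_X]
    refine mul_ne_zero hlc (Finset.prod_ne_zero_iff.mpr fun i _ => ?_)
    rw [sub_ne_zero]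
    exact fun h => ha0' ⟨i, h.symm⟩
  -- the family of top powers over all n+1 points
  set v : Fin (n + 1) → Polynomial ℂ := fun i => (X - C (a i)) ^ n with hv_def
  -- linear independence of v
  have hli : LinearIndependent ℂ v := by
    rw [Fintype.linearIndependent_iff]
    intro c hc
    have key : ∀ m : Fin (n + 1), ∑ i : Fin (n + 1), c i * (-(a i)) ^ (m : ℕ) = 0 := by
      intro m
      have hm : (m : ℕ) ≤ n := Nat.lt_succ_iff.mp m.isLt
      have := congrArg (fun q => q.coeff (n - (m : ℕ))) hc
      simp only [finset_sum_coeff, coeff_smul, coeff_zero, smul_eq_mul] at this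
      have hch : ((n.choose (n - (m : ℕ)) : ℂ)) ≠ 0 := by
        exact_mod_cast (Nat.choose_pos (Nat.sub_le n _)).ne'
      have expand : ∀ i : Fin (n + 1),
          c i * (v i).coeff (n - (m : ℕ)) =
          c i * (-(a i)) ^ (m : ℕ) * (n.choose (n - (m : ℕ)) : ℂ) := by
        intro i
        rw [hv_def]
        simp only
        rw [coeff_X_sub_C_pow', Nat.sub_sub_self hm]
        ring
      rw [Finset.sum_congr rfl fun i _ => expand i, ← Finset.sum_mul] at this
      exact (mul_eq_zero.mp this).resolve_right hch
    have := Matrix.eq_zero_of_forall_pow_sum_mul_pow_eq_zero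
      (f := fun i => -(a i)) (v := c) (fun x y h => ha_inj (neg_injective h)) key
    exact fun i => congrFun this i
  -- v spans degreeLT ℂ (n+1)
  have hmemv : ∀ i, v i ∈ degreeLT ℂ (n + 1) := by
    intro i
    rw [mem_degreeLT]
    calc (v i).degree ≤ ((v i).natDegree : WithBot ℕ) := degree_le_natDegree
      _ ≤ (n : WithBot ℕ) := by
          rw [hv_def]
          exact_mod_cast Nat.cast_le.mpr (by simp [natDegree_pow, natDegree_X_sub_C])
      _ < ((n + 1 : ℕ) : WithBot ℕ) := by exact_mod_cast Nat.lt_succ_self n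
  have hspan_le : Submodule.span ℂ (Set.range v) ≤ degreeLT ℂ (n + 1) := by
    rw [Submodule.span_le]
    rintro _ ⟨i, rfl⟩
    exact hmemv i
  have hfd : FiniteDimensional ℂ (degreeLT ℂ (n + 1)) :=
    (degreeLTEquiv ℂ (n + 1)).symm.finiteDimensional
  have hrank : Module.finrank ℂ (degreeLT ℂ (n + 1)) = n + 1 := by
    rw [LinearEquiv.finrank_eq (degreeLTEquiv ℂ (n + 1))]
    simp [Module.finrank_fin_fun]
  have hspan_eq : Submodule.span ℂ (Set.range v) = degreeLT ℂ (n + 1) := by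
    refine Submodule.eq_of_le_of_finrank_eq hspan_le ?_
    rw [finrank_span_eq_card hli, hrank, Fintype.card_fin]
  intro q
  constructor
  · rintro ⟨hdeg, hform⟩
    have hqmem : q ∈ degreeLT ℂ (n + 1) := by
      rw [mem_degreeLT]
      calc q.degree ≤ (q.natDegree : WithBot ℕ) := degree_le_natDegree
        _ ≤ (n : WithBot ℕ) := by exact_mod_cast Nat.cast_le.mpr hdeg
        _ < ((n + 1 : ℕ) : WithBot ℕ) := by exact_mod_cast Nat.lt_succ_self n
    rw [← hspan_eq] at hqmem
    obtain ⟨c, hc⟩ := (Submodule.mem_span_range_iff_exists_fun ℂ).mp hqmem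
    have hform' : (0 : ℂ) = ∑ i, c i * p.eval (a i) := by
      rw [← hform, ← hc, apolarForm_sum]
      refine Finset.sum_congr rfl fun i _ => ?_
      rw [apolarForm_smul, apolarForm_pow_eval n p hpdeg]
    rw [Fin.sum_univ_succ] at hform'
    have hzero : ∀ i : Fin n, c i.succ * p.eval (a i.succ) = 0 := by
      intro i
      rw [ha_def]
      simp [Fin.cons_succ, hroot i]
    rw [Finset.sum_eq_zero fun i _ => hzero i, add_zero] at hform'
    have hc0 : c 0 = 0 := by
      have heq : p.eval (a 0) = p.eval a0 := by rw [ha_def]; simp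
      rcases mul_eq_zero.mp hform'.symm with h | h
      · exact h
      · exact absurd (heq ▸ h) hpa0
    rw [← hc, Fin.sum_univ_succ, hc0, zero_smul, zero_add]
    refine Submodule.sum_mem _ fun i _ => Submodule.smul_mem _ _ (Submodule.subset_span ⟨i, ?_⟩)
    rw [hv_def, ha_def]
    simp [Fin.cons_succ]
  · intro hq
    obtain ⟨c, hc⟩ := (Submodule.mem_span_range_iff_exists_fun ℂ).mp hq
    constructor
    · rw [← hc]
      refine natDegree_sum_le_of_forall_le _ _ fun i _ => ?_
      refine (natDegree_smul_le _ _).trans ?_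
      simp [natDegree_pow, natDegree_X_sub_C]
    · rw [← hc, apolarForm_sum]
      refine Finset.sum_eq_zero fun i _ => ?_
      rw [apolarForm_smul, apolarForm_pow_eval n p hpdeg, hroot i, mul_zero]
end

section
/- Let p_1, …, p_k ∈ P_n be linearly independent polynomials and ℓ = n + 1 − k. Then deg W(p_1, …, p_k) ≤ kℓ, with equality if and only if p_1, …, p_k are linearly independent modulo P_{ℓ−1} (i.e., no nonzero linear combination of them has degree ≤ ℓ − 1). -/
open Polynomial Finset Matrix

noncomputable section

/-- iterated derivative as ℂ-linear map row -/
def Drow (k : ℕ) : Polynomial ℂ →ₗ[ℂ] (Fin k → Polynomial ℂ) :=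
  LinearMap.pi fun j : Fin k => (Polynomial.derivative : Polynomial ℂ →ₗ[ℂ] Polynomial ℂ) ^ (j : ℕ)

lemma Drow_apply (k : ℕ) (q : Polynomial ℂ) (j : Fin k) :
    Drow k q j = (fun r : Polynomial ℂ => Polynomial.derivative r)^[(j:ℕ)] q := by
  simp [Drow, Module.End.pow_apply]

def Wmap (k : ℕ) : MultilinearMap ℂ (fun _ : Fin k => Polynomial ℂ) (Polynomial ℂ) :=
  ((Matrix.detRowAlternating : (Fin k → Polynomial ℂ) [⋀^Fin k]→ₗ[Polynomial ℂ] Polynomial ℂ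
    ).toMultilinearMap.restrictScalars ℂ).compLinearMap (fun _ => Drow k)

lemma Wmap_apply (k : ℕ) (p : Fin k → Polynomial ℂ) :
    Wmap k p = Matrix.det (Matrix.of fun i j : Fin k =>
      (fun q : Polynomial ℂ => Polynomial.derivative q)^[(j : ℕ)] (p i)) := by
  have : (Matrix.of fun i j : Fin k =>
      (fun q : Polynomial ℂ => Polynomial.derivative q)^[(j : ℕ)] (p i)) =
      fun i => Drow k (p i) := by
    ext i j; simp [Drow_apply]
  rw [this]
  rfl

end

lemma iterDeriv_Xpow (d j : ℕ) :
    (fun q : Polynomial ℂ => Polynomial.derivative q)^[j] (X ^ d) =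
      (d.descFactorial j : ℂ) • X ^ (d - j) := by
  induction j with
  | zero => simp
  | succ j ih =>
    rw [Function.iterate_succ_apply', ih, derivative_smul, derivative_X_pow]
    have h1 : d - (j+1) = d - j - 1 := by omega
    have h2 : (d.descFactorial (j+1) : ℂ) = (d.descFactorial j : ℂ) * ((d - j : ℕ) : ℂ) := by
      rw [Nat.descFactorial_succ]; push_cast; ring
    rw [h1, h2]
    simp only [smul_eq_C_mul, _root_.map_mul]
    ring

noncomputable def monW (k : ℕ) (d : Fin k → ℕ) : Polynomial ℂ :=
  Matrix.det (Matrix.of fun i j : Fin k =>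
    (fun q : Polynomial ℂ => Polynomial.derivative q)^[(j : ℕ)] (X ^ d i))

lemma prod_smul_Xpow (k : ℕ) (c : Fin k → ℂ) (e : Fin k → ℕ) :
    ∏ i, ((c i) • X ^ (e i) : Polynomial ℂ) = C (∏ i, c i) * X ^ (∑ i, e i) := by
  simp only [smul_eq_C_mul]
  rw [Finset.prod_mul_distrib, ← _root_.map_prod, Finset.prod_pow_eq_pow_sum]

lemma monW_coeff (k : ℕ) (d : Fin k → ℕ) (m : ℕ) :
    (monW k d).coeff m =
      if m + (∑ i : Fin k, (i : ℕ)) = ∑ i, d i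
      then Matrix.det (Matrix.of fun i j : Fin k => ((d i).descFactorial (j : ℕ) : ℂ))
      else 0 := by
  rw [monW, Matrix.det_apply', Matrix.det_apply', finset_sum_coeff]
  have : (if m + (∑ i : Fin k, (i : ℕ)) = ∑ i, d i
      then ∑ σ : Equiv.Perm (Fin k), Equiv.Perm.sign σ *
        ∏ i, (Matrix.of fun i j : Fin k => ((d i).descFactorial (j : ℕ) : ℂ)) (σ i) i
      else 0) =
      ∑ σ : Equiv.Perm (Fin k), (if m + (∑ i : Fin k, (i : ℕ)) = ∑ i, d i
        then (Equiv.Perm.sign σ : ℂ) * ∏ i, ((d (σ i)).descFactorial (i : ℕ) : ℂ) else 0) := by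
    split_ifs <;> simp [Matrix.of_apply]
  rw [this]
  refine Finset.sum_congr rfl fun σ _ => ?_
  simp only [Matrix.of_apply, iterDeriv_Xpow]
  rw [prod_smul_Xpow]
  rw [show ((Equiv.Perm.sign σ : ℤ) : Polynomial ℂ) = C ((Equiv.Perm.sign σ : ℤ) : ℂ) from by
    simp]
  rw [← mul_assoc, ← C_mul, coeff_C_mul, coeff_X_pow, mul_ite, mul_one, mul_zero]
  by_cases hall : ∀ i : Fin k, (i : ℕ) ≤ d (σ i)
  · have hE : (∑ i : Fin k, (d (σ i) - (i : ℕ))) + ∑ i : Fin k, (i : ℕ) = ∑ i, d i := by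
      rw [← Finset.sum_add_distrib, ← Equiv.sum_comp σ d]
      exact Finset.sum_congr rfl fun i _ => by have := hall i; omega
    by_cases hm : m + (∑ i : Fin k, (i : ℕ)) = ∑ i, d i
    · rw [if_pos (by omega), if_pos hm]
    · rw [if_neg (by omega), if_neg hm]
  · push_neg at hall
    obtain ⟨i0, hi0⟩ := hall
    have hc : ((d (σ i0)).descFactorial (i0 : ℕ) : ℂ) = 0 := by
      rw [Nat.descFactorial_eq_zero_iff_lt.2 hi0]; simp
    have hp : ∏ i, ((d (σ i)).descFactorial (i : ℕ) : ℂ) = 0 :=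
      Finset.prod_eq_zero (Finset.mem_univ i0) hc
    rw [hp]
    simp

lemma sum_range_card_le (S : Finset ℕ) : ∑ i ∈ Finset.range S.card, i ≤ ∑ x ∈ S, x := by
  induction S using Finset.strongInduction with
  | _ S ih =>
    rcases S.eq_empty_or_nonempty with h | h
    · simp [h]
    · have hMS : S.max' h ∈ S := S.max'_mem h
      have hcard : S.card ≤ S.max' h + 1 := by
        have hsub : S ⊆ Finset.range (S.max' h + 1) :=
          fun x hx => Finset.mem_range.2 (Nat.lt_succ_of_le (S.le_max' x hx))
        simpa using Finset.card_le_card hsub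
      have h1 := ih (S.erase (S.max' h)) (Finset.erase_ssubset hMS)
      have hc : (S.erase (S.max' h)).card = S.card - 1 := Finset.card_erase_of_mem hMS
      have h2 : ∑ x ∈ S, x = S.max' h + ∑ x ∈ S.erase (S.max' h), x :=
        (Finset.add_sum_erase _ _ hMS).symm
      have hpos : 0 < S.card := Finset.card_pos.2 h
      have h4 : ∑ i ∈ Finset.range S.card, i =
          (∑ i ∈ Finset.range (S.card - 1), i) + (S.card - 1) := by
        conv_lhs => rw [show S.card = (S.card - 1) + 1 by omega]
        rw [Finset.sum_range_succ]
      rw [hc] at h1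
      omega

lemma inj_sum_ge {k : ℕ} (g : Fin k → ℕ) (hg : Function.Injective g) :
    ∑ i : Fin k, (i : ℕ) ≤ ∑ i, g i := by
  have h1 : (Finset.image g Finset.univ).card = k := by
    rw [Finset.card_image_of_injective _ hg, Finset.card_univ, Fintype.card_fin]
  have h2 : ∑ x ∈ Finset.image g Finset.univ, x = ∑ i, g i :=
    Finset.sum_image fun i _ j _ h => hg h
  have h3 := sum_range_card_le (Finset.image g Finset.univ)
  rw [h1, h2] at h3
  exact le_trans (le_of_eq (Fin.sum_univ_eq_sum_range (fun i => i) k)) h3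

lemma inj_sum_eq_lt {k : ℕ} (g : Fin k → ℕ) (hg : Function.Injective g)
    (hsum : ∑ i, g i = ∑ i : Fin k, (i : ℕ)) : ∀ i, g i < k := by
  intro i0
  by_contra hge
  push_neg at hge
  have h2 : ∑ i, g i = g i0 + ∑ x ∈ (Finset.image g Finset.univ).erase (g i0), x := by
    have himg : ∑ x ∈ Finset.image g Finset.univ, x = ∑ i : Fin k, g i :=
      Finset.sum_image (f := fun x => x) fun i _ j _ h => hg h
    rw [← himg]
    exact (Finset.add_sum_erase _ _ (Finset.mem_image_of_mem g (Finset.mem_univ i0))).symm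
  have h1 : ((Finset.image g Finset.univ).erase (g i0)).card = k - 1 := by
    rw [Finset.card_erase_of_mem (Finset.mem_image_of_mem g (Finset.mem_univ i0)),
      Finset.card_image_of_injective _ hg, Finset.card_univ, Fintype.card_fin]
  have h3 := sum_range_card_le ((Finset.image g Finset.univ).erase (g i0))
  rw [h1] at h3
  have h5 : ∑ i : Fin k, (i : ℕ) = ∑ i ∈ Finset.range k, i := Fin.sum_univ_eq_sum_range (fun i => i) k
  have h6 : 0 < k := i0.pos
  have h7 : ∑ i ∈ Finset.range k, i = (∑ i ∈ Finset.range (k-1), i) + (k - 1) := by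
    conv_lhs => rw [show k = (k - 1) + 1 by omega]
    rw [Finset.sum_range_succ]
  have h8 : g i0 ≤ ∑ i, g i := Finset.single_le_sum (fun _ _ => Nat.zero_le _) (Finset.mem_univ i0)
  omega

lemma r_sum_le {k n : ℕ} (r : Fin k → Fin (n+1)) (hr : Function.Injective r) :
    (∑ i, ((r i : ℕ))) + ∑ i : Fin k, (i : ℕ) ≤ k * n := by
  have hg : Function.Injective fun i => n - (r i : ℕ) := by
    intro i j h
    have hi : (r i : ℕ) ≤ n := Nat.lt_succ_iff.1 (r i).isLt
    have hj : (r j : ℕ) ≤ n := Nat.lt_succ_iff.1 (r j).isLt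
    simp only at h
    exact hr (Fin.ext (by omega))
  have h1 := inj_sum_ge _ hg
  have h2 : (∑ i, (r i : ℕ)) + (∑ i, (n - (r i : ℕ))) = k * n := by
    rw [← Finset.sum_add_distrib]
    have he : ∀ i ∈ Finset.univ, (r i : ℕ) + (n - (r i : ℕ)) = n := fun i _ => by
      have := Nat.lt_succ_iff.1 (r i).isLt; omega
    rw [Finset.sum_congr rfl he, Finset.sum_const, Finset.card_univ, Fintype.card_fin, smul_eq_mul]
  omega

lemma r_sum_eq {k n : ℕ} (r : Fin k → Fin (n+1)) (hr : Function.Injective r)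
    (hsum : (∑ i, ((r i : ℕ))) + ∑ i : Fin k, (i : ℕ) = k * n) :
    ∀ i, n + 1 ≤ (r i : ℕ) + k := by
  have hg : Function.Injective fun i => n - (r i : ℕ) := by
    intro i j h
    have hi : (r i : ℕ) ≤ n := Nat.lt_succ_iff.1 (r i).isLt
    have hj : (r j : ℕ) ≤ n := Nat.lt_succ_iff.1 (r j).isLt
    simp only at h
    exact hr (Fin.ext (by omega))
  have h2 : (∑ i, (r i : ℕ)) + (∑ i, (n - (r i : ℕ))) = k * n := by
    rw [← Finset.sum_add_distrib]
    have he : ∀ i ∈ Finset.univ, (r i : ℕ) + (n - (r i : ℕ)) = n := fun i _ => by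
      have := Nat.lt_succ_iff.1 (r i).isLt; omega
    rw [Finset.sum_congr rfl he, Finset.sum_const, Finset.card_univ, Fintype.card_fin, smul_eq_mul]
  have h3 : (∑ i, (n - (r i : ℕ))) = ∑ i : Fin k, (i : ℕ) := by omega
  intro i
  have h4 := inj_sum_eq_lt _ hg h3 i
  have hi : (r i : ℕ) ≤ n := Nat.lt_succ_iff.1 (r i).isLt
  omega

/-- The Wronskian `W(p_1, …, p_k) = det(p_i^{(j−1)})_{1≤i,j≤k}`. -/
noncomputable def wronskian' (k : ℕ) (p : Fin k → Polynomial ℂ) : Polynomial ℂ :=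
  Matrix.det (Matrix.of fun i j : Fin k =>
    (fun q : Polynomial ℂ => Polynomial.derivative q)^[(j : ℕ)] (p i))

/-- for linearly independent `p_1, …, p_k ∈ P_n` and `ℓ = n + 1 − k`,
`deg W(p_1, …, p_k) ≤ kℓ`, with equality iff `p_1, …, p_k` are linearly independent
modulo `P_{ℓ−1}` (no nonzero linear combination has degree `≤ ℓ − 1`, i.e. lies in
the space of polynomials of degree `< ℓ`). -/
theorem wronskian_degree_bound (k n : ℕ) (hk : k ≤ n + 1)
    (p : Fin k → Polynomial ℂ) (hdeg : ∀ i, (p i).natDegree ≤ n)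
    (hind : LinearIndependent ℂ p) :
    (wronskian' k p).natDegree ≤ k * (n + 1 - k) ∧
    ((wronskian' k p).natDegree = k * (n + 1 - k) ↔
      ∀ c : Fin k → ℂ, c ≠ 0 →
        ¬ (∑ i : Fin k, c i • p i) ∈ Polynomial.degreeLT ℂ (n + 1 - k)) := by
  classical
  set ℓ := n + 1 - k with hℓdef
  set S := ∑ i : Fin k, (i : ℕ) with hSdef
  -- Gauss identity
  have hS2 : 2 * S = k * (k - 1) := by
    have h1 : S = ∑ i ∈ Finset.range k, i := Fin.sum_univ_eq_sum_range (fun i => i) k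
    have h2 := Finset.sum_range_id_mul_two k
    omega
  have hkn : k * ℓ + 2 * S = k * n := by
    rcases Nat.eq_zero_or_pos k with h0 | h0
    · subst h0; simp [hSdef]
    · have h1 : ℓ + (k - 1) = n := by omega
      have h2 : k * ℓ + k * (k - 1) = k * n := by rw [← Nat.mul_add, h1]
      omega
  -- expansion of the Wronskian
  have hp : p = fun i => ∑ d : Fin (n+1), ((p i).coeff d) • (X ^ (d : ℕ) : Polynomial ℂ) := by
    funext i
    conv_lhs => rw [Polynomial.as_sum_range' (p i) (n+1) (Nat.lt_succ_of_le (hdeg i))]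
    rw [← Fin.sum_univ_eq_sum_range (fun d => Polynomial.monomial d ((p i).coeff d)) (n+1)]
    exact Finset.sum_congr rfl fun d _ => (Polynomial.smul_X_eq_monomial).symm
  have hWm : wronskian' k p = ∑ r : Fin k → Fin (n+1),
      (∏ i, (p i).coeff (r i)) • monW k (fun i => (r i : ℕ)) := by
    have h0 : wronskian' k p = Wmap k p := (Wmap_apply k p).symm
    rw [h0]
    conv_lhs => rw [hp]
    rw [MultilinearMap.map_sum]
    refine Finset.sum_congr rfl fun r _ => ?_
    rw [MultilinearMap.map_smul_univ]
    congr 1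
    rw [Wmap_apply]
    rfl
  have hWc : ∀ m, (wronskian' k p).coeff m = ∑ r : Fin k → Fin (n+1),
      (∏ i, (p i).coeff (r i)) * (monW k fun i => (r i : ℕ)).coeff m := by
    intro m
    rw [hWm, Polynomial.finset_sum_coeff]
    exact Finset.sum_congr rfl fun r _ => by rw [Polynomial.coeff_smul, smul_eq_mul]
  have hmonW0 : ∀ r : Fin k → Fin (n+1), ¬ Function.Injective r →
      monW k (fun i => (r i : ℕ)) = 0 := by
    intro r hinj
    rw [Function.not_injective_iff] at hinj
    obtain ⟨a, b, hab, hne⟩ := hinj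
    refine Matrix.det_zero_of_row_eq hne (funext fun j => ?_)
    simp [Matrix.of_apply, hab]
  -- degree bound
  have hbound : (wronskian' k p).natDegree ≤ k * ℓ := by
    rw [Polynomial.natDegree_le_iff_coeff_eq_zero]
    intro m hm
    rw [hWc m]
    refine Finset.sum_eq_zero fun r _ => ?_
    by_cases hinj : Function.Injective r
    · rw [monW_coeff, ← hSdef, if_neg, mul_zero]
      have hle := r_sum_le r hinj
      rw [← hSdef] at hle
      omega
    · rw [hmonW0 r hinj, Polynomial.coeff_zero, mul_zero]
  refine ⟨hbound, ?_⟩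
  -- matrices B (descFactorial/vandermonde) and T (top coefficients)
  set B : Matrix (Fin k) (Fin k) ℂ :=
    Matrix.of (fun i j : Fin k => (((ℓ + (i : ℕ)).descFactorial (j : ℕ) : ℂ))) with hBdef
  set T : Matrix (Fin k) (Fin k) ℂ :=
    Matrix.of (fun i j : Fin k => (p i).coeff (ℓ + (j : ℕ))) with hTdef
  have hcoeff : (wronskian' k p).coeff (k * ℓ) = B.det * Tᵀ.det := by
    rw [hWc]
    have hfilter : ∑ r : Fin k → Fin (n+1),
          (∏ i, (p i).coeff (r i)) * (monW k fun i => (r i : ℕ)).coeff (k * ℓ)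
        = ∑ r ∈ Finset.univ.filter (fun r : Fin k → Fin (n+1) =>
            Function.Injective r ∧ (∑ i, (r i : ℕ)) = k * ℓ + S),
            (∏ i, (p i).coeff (r i)) * (monW k fun i => (r i : ℕ)).coeff (k * ℓ) := by
      symm
      apply Finset.sum_filter_of_ne
      intro r _ hne
      by_cases hinj : Function.Injective r
      · refine ⟨hinj, ?_⟩
        by_contra hs
        rw [monW_coeff, ← hSdef, if_neg (by omega), mul_zero] at hne
        exact hne rfl
      · exact absurd (by rw [hmonW0 r hinj, Polynomial.coeff_zero, mul_zero]) hne
    rw [hfilter]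
    have hℓk : ℓ + k = n + 1 := by omega
    have hbij : ∑ σ : Equiv.Perm (Fin k),
            (∏ i, T i (σ i)) * (((Equiv.Perm.sign σ : ℤ) : ℂ) * B.det)
        = ∑ r ∈ Finset.univ.filter (fun r : Fin k → Fin (n+1) =>
            Function.Injective r ∧ (∑ i, (r i : ℕ)) = k * ℓ + S),
            (∏ i, (p i).coeff (r i)) * (monW k fun i => (r i : ℕ)).coeff (k * ℓ) := by
      refine Finset.sum_bij
        (fun (σ : Equiv.Perm (Fin k)) (_ : σ ∈ Finset.univ) =>
          (fun i => (⟨ℓ + (σ i : ℕ), by have := (σ i).isLt; omega⟩ : Fin (n+1))))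
        ?_ ?_ ?_ ?_
      · -- membership in the filter
        intro σ _
        rw [Finset.mem_filter]
        refine ⟨Finset.mem_univ _, fun i j h => ?_, ?_⟩
        · have h2 : ℓ + (σ i : ℕ) = ℓ + (σ j : ℕ) := congrArg Fin.val h
          exact σ.injective (Fin.ext (by omega))
        · show ∑ i : Fin k, (ℓ + (σ i : ℕ)) = k * ℓ + S
          rw [Finset.sum_add_distrib, Finset.sum_const, Finset.card_univ, Fintype.card_fin,
            smul_eq_mul, Equiv.sum_comp σ (fun i : Fin k => (i : ℕ)), ← hSdef]
      · -- injectivity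
        intro σ _ τ _ h
        ext i
        have h2 := congrFun h i
        have h3 : ℓ + (σ i : ℕ) = ℓ + (τ i : ℕ) := congrArg Fin.val h2
        omega
      · -- surjectivity
        intro r hr
        rw [Finset.mem_filter] at hr
        obtain ⟨-, hinj, hsum⟩ := hr
        have hge : ∀ i, n + 1 ≤ (r i : ℕ) + k := by
          apply r_sum_eq r hinj
          rw [← hSdef]
          omega
        have hs0 : Function.Injective (fun i : Fin k =>
            (⟨(r i : ℕ) - ℓ, by have h1 := (r i).isLt; have h2 := i.pos; omega⟩ : Fin k)) := by
          intro i j h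
          have h2 : (r i : ℕ) - ℓ = (r j : ℕ) - ℓ := congrArg Fin.val h
          have h3 := hge i
          have h4 := hge j
          exact hinj (Fin.ext (by omega))
        refine ⟨Equiv.ofBijective _ ((Finite.injective_iff_bijective).1 hs0), Finset.mem_univ _, ?_⟩
        funext i
        apply Fin.ext
        simp only [Equiv.ofBijective_apply]
        have := hge i
        have := (r i).isLt
        omega
      · -- values agree
        intro σ _
        show (∏ i, T i (σ i)) * (((Equiv.Perm.sign σ : ℤ) : ℂ) * B.det)
            = (∏ i, (p i).coeff (ℓ + (σ i : ℕ)))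
              * (monW k fun i => ℓ + (σ i : ℕ)).coeff (k * ℓ)
        rw [monW_coeff, ← hSdef]
        have hsum2 : (∑ i : Fin k, (ℓ + (σ i : ℕ))) = k * ℓ + S := by
          rw [Finset.sum_add_distrib, Finset.sum_const, Finset.card_univ, Fintype.card_fin,
            smul_eq_mul, Equiv.sum_comp σ (fun i : Fin k => (i : ℕ)), ← hSdef]
        rw [if_pos (by omega)]
        have hperm : (Matrix.of fun i j : Fin k =>
            (((ℓ + (σ i : ℕ)).descFactorial (j : ℕ) : ℂ))) = B.submatrix σ id := by
          ext i j
          simp [hBdef, Matrix.submatrix_apply]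
        rw [hperm, Matrix.det_permute]
        have hTprod : (∏ i, (p i).coeff (ℓ + (σ i : ℕ))) = ∏ i, T i (σ i) :=
          Finset.prod_congr rfl fun i _ => rfl
        rw [hTprod]
    rw [← hbij, Matrix.det_apply' Tᵀ, Finset.mul_sum]
    refine Finset.sum_congr rfl fun σ _ => ?_
    have : ∀ i, Tᵀ (σ i) i = T i (σ i) := fun i => rfl
    simp only [this]
    ring
  -- B has nonzero determinant (Vandermonde)
  have hBne : B.det ≠ 0 := by
    have hBv : B = Matrix.of (fun i j : Fin k =>
        ((descPochhammer ℂ (j : ℕ)).eval (((ℓ + (i : ℕ) : ℕ) : ℂ)))) := by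
      ext i j
      exact (descPochhammer_eval_eq_descFactorial (R := ℂ) _ _).symm
    have hvd := Matrix.det_eval_matrixOfPolynomials_eq_det_vandermonde
      (fun i : Fin k => (((ℓ + (i : ℕ) : ℕ)) : ℂ)) (fun j => descPochhammer ℂ (j : ℕ))
      (fun j => descPochhammer_natDegree (R := ℂ) (j : ℕ))
      (fun j => monic_descPochhammer ℂ (j : ℕ))
    rw [hBv, ← hvd]
    rw [Ne, Matrix.det_vandermonde_eq_zero_iff]
    rintro ⟨i, j, hij, hne⟩
    apply hne
    have : ((ℓ + (i : ℕ) : ℕ) : ℂ) = ((ℓ + (j : ℕ) : ℕ) : ℂ) := hij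
    have h2 : ℓ + (i : ℕ) = ℓ + (j : ℕ) := Nat.cast_injective this
    exact Fin.ext (by omega)
  -- membership in degreeLT vs vecMul
  have hmem : ∀ c : Fin k → ℂ,
      ((∑ i, c i • p i) ∈ Polynomial.degreeLT ℂ ℓ) ↔ Matrix.vecMul c T = 0 := by
    intro c
    have hcoeffsum : ∀ m : ℕ, (∑ i, c i • p i).coeff m = ∑ i, c i * (p i).coeff m := by
      intro m
      rw [Polynomial.finset_sum_coeff]
      exact Finset.sum_congr rfl fun i _ => by rw [Polynomial.coeff_smul, smul_eq_mul]
    rw [Polynomial.mem_degreeLT, Polynomial.degree_lt_iff_coeff_zero]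
    constructor
    · intro h
      funext j
      have h2 := h (ℓ + (j : ℕ)) (by exact_mod_cast Nat.cast_le.2 le_self_add)
      rw [hcoeffsum] at h2
      simpa [Matrix.vecMul, dotProduct, hTdef] using h2
    · intro h m hm
      have hm' : ℓ ≤ m := by exact_mod_cast hm
      rw [hcoeffsum]
      by_cases hmn : m ≤ n
      · have hj : m - ℓ < k := by omega
        have h2 := congrFun h ⟨m - ℓ, hj⟩
        simp only [Matrix.vecMul, dotProduct, hTdef, Pi.zero_apply] at h2
        have h3 : ℓ + (m - ℓ) = m := by omega
        simpa [h3] using h2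
      · refine Finset.sum_eq_zero fun i _ => ?_
        rw [Polynomial.coeff_eq_zero_of_natDegree_lt (lt_of_le_of_lt (hdeg i) (by omega)),
          mul_zero]
  -- T determinant vs the independence condition
  have hTiff : Tᵀ.det ≠ 0 ↔ (∀ c : Fin k → ℂ, c ≠ 0 →
      ¬ (∑ i : Fin k, c i • p i) ∈ Polynomial.degreeLT ℂ ℓ) := by
    rw [Matrix.det_transpose]
    have h1 : Function.Injective T.vecMul ↔ T.det ≠ 0 := by
      rw [Matrix.vecMul_injective_iff_isUnit, Matrix.isUnit_iff_isUnit_det, isUnit_iff_ne_zero]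
    have h2 : Function.Injective T.vecMul ↔ ∀ c, Matrix.vecMul c T = 0 → c = 0 := by
      rw [← Matrix.coe_vecMulLinear, ← LinearMap.ker_eq_bot, LinearMap.ker_eq_bot']
      exact Iff.rfl
    constructor
    · intro hdet c hc hm
      exact hc ((h2.1 (h1.2 hdet)) c ((hmem c).1 hm))
    · intro hcond
      rw [← h1, h2]
      intro c hc
      by_contra hc0
      exact hcond c hc0 ((hmem c).2 hc)
  rcases Nat.eq_zero_or_pos (k * ℓ) with hkl0 | hklpos
  · constructor
    · intro _
      rcases Nat.mul_eq_zero.1 hkl0 with hk0 | hl0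
      · intro c hc _
        exact hc (funext fun i => absurd i.isLt (by omega))
      · intro c hc hm
        rw [Polynomial.mem_degreeLT, hl0] at hm
        have hz : (∑ i, c i • p i) = 0 := by
          apply Polynomial.ext
          intro m
          rw [Polynomial.coeff_zero]
          exact (Polynomial.degree_lt_iff_coeff_zero _ 0).1 (by exact_mod_cast hm) m (Nat.zero_le m)
        have hci := Fintype.linearIndependent_iff.1 hind c hz
        exact hc (funext hci)
    · intro _
      omega
  · constructor
    · intro heq c hc hm
      have hW0 : wronskian' k p ≠ 0 := fun hz => by
        rw [hz, Polynomial.natDegree_zero] at heq; omega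
      have hlc : (wronskian' k p).coeff (k * ℓ) ≠ 0 := by
        rw [← heq]
        exact Polynomial.leadingCoeff_ne_zero.2 hW0
      rw [hcoeff] at hlc
      have hTne : Tᵀ.det ≠ 0 := fun h => hlc (by rw [h, mul_zero])
      exact (hTiff.1 hTne) c hc hm
    · intro hcond
      have hTne := hTiff.2 hcond
      have hne0 : (wronskian' k p).coeff (k * ℓ) ≠ 0 := by
        rw [hcoeff]; exact mul_ne_zero hBne hTne
      exact le_antisymm hbound (Polynomial.le_natDegree_of_ne_zero hne0)
end

section
/- The Wronskian is equivariant under inversion: let p_1, …, p_k ∈ P_n be polynomials of degree ≤ n, ℓ = n + 1 − k, and define p̂_i(ẑ) = ẑ^n p_i(−1/ẑ) (a polynomial of degree ≤ n). Then, as polynomials in ẑ, W(p̂_1, …, p̂_k)(ẑ) = ẑ^{kℓ} W(p_1, …, p_k)(−1/ẑ). -/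
/-!
Both sides are multilinear in `(p_1, …, p_k)` (the Wronskian is alternating and inversion is
linear), so it suffices to take monomials `p_i = X ^ a_i` with `a_i ≤ n`, and distinct exponents,
since otherwise both sides vanish. Multiplying column `j` of the Wronskian matrix of monomials by
`X ^ j` turns its entries into `descFactorial (b_i, j) * X ^ b_i`, and the descending factorials
form a monic basis, so `W(X ^ b_1, …, X ^ b_k) = V(b) * X ^ (∑ b_i - k(k-1)/2)` with `V` the
Vandermonde determinant. Inversion sends `X ^ a` to `(-1) ^ a * X ^ (n - a)`, and
`V(n - a) = (-1) ^ (k(k-1)/2) V(a)`; comparing signs and exponents gives the identity.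
-/

open Polynomial Finset

/-- The inversion action on `P_n`: `p(z) ↦ ẑ^n p(−1/ẑ) = ∑_j (−1)^j p_j ẑ^{n−j}`. -/
noncomputable def invAct (n : ℕ) (p : Polynomial ℂ) : Polynomial ℂ :=
  ∑ j ∈ Finset.range (n + 1), C ((-1 : ℂ) ^ j * p.coeff j) * X ^ (n - j)

theorem Matrix.det_vandermonde_neg {R : Type*} [CommRing R] {k : ℕ} (v : Fin k → R) :
    (Matrix.vandermonde fun i => -v i).det =
      (-1) ^ (∑ i ∈ range k, i) * (Matrix.vandermonde v).det := by
  have h := Matrix.det_mul_row (fun j : Fin k => (-1 : R) ^ (j : ℕ)) (Matrix.vandermonde v)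
  rw [prod_pow_eq_pow_sum, Fin.sum_univ_eq_sum_range (fun i => i)] at h
  rw [← h]
  congr 1
  ext i j
  exact neg_pow (v i) j

theorem Matrix.det_vandermonde_const_sub {R : Type*} [CommRing R] {k : ℕ} (a : R)
    (v : Fin k → R) :
    (Matrix.vandermonde fun i => a - v i).det =
      (-1) ^ (∑ i ∈ range k, i) * (Matrix.vandermonde v).det := by
  rw [← det_vandermonde_neg, ← det_vandermonde_add (fun i => -v i) a]
  simp only [neg_add_eq_sub]

theorem Finset.sum_range_id_le_sum_of_injective {k : ℕ} {b : Fin k → ℕ}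
    (hb : Function.Injective b) : ∑ i ∈ range k, i ≤ ∑ i, b i := by
  have hb' : Function.Injective fun i => (b i : ℤ) := Nat.cast_injective.comp hb
  have key := Finset.sum_range_le_sum (s := univ.image fun i => (b i : ℤ)) (c := 0) (by simp)
  rw [card_image_of_injective _ hb', card_univ, Fintype.card_fin,
    sum_image fun i _ j _ h => hb' h] at key
  have : ((∑ i ∈ range k, i : ℕ) : ℤ) ≤ ((∑ i, b i : ℕ) : ℤ) := by push_cast; simpa using key
  exact_mod_cast this

theorem Matrix.det_descFactorial_eq_det_vandermonde {R : Type*} [CommRing R] [IsDomain R]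
    {k : ℕ} (b : Fin k → ℕ) :
    (Matrix.of fun i j : Fin k => ((b i).descFactorial j : R)).det =
      (Matrix.vandermonde fun i => (b i : R)).det := by
  rw [Matrix.det_eval_matrixOfPolynomials_eq_det_vandermonde _ (fun j => descPochhammer R j)
    (fun j => descPochhammer_natDegree R j) (fun j => monic_descPochhammer R j)]
  simp [descPochhammer_eval_eq_descFactorial]

theorem Polynomial.X_pow_mul_iterate_derivative_X_pow {R : Type*} [CommSemiring R] (b j : ℕ) :
    (X : R[X]) ^ j * derivative^[j] (X ^ b) = C (b.descFactorial j : R) * X ^ b := by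
  rw [iterate_derivative_X_pow_eq_C_mul, mul_left_comm, ← pow_add]
  rcases le_or_gt j b with h | h
  · rw [Nat.add_sub_cancel' h]
  · simp [Nat.descFactorial_eq_zero_iff_lt.mpr h]

theorem MultilinearMap.eq_of_forall_X_pow_eq {R M ι : Type*} [CommSemiring R] [AddCommMonoid M]
    [Module R M] [Fintype ι] [DecidableEq ι] {f g : MultilinearMap R (fun _ : ι => R[X]) M}
    {n : ℕ} (h : ∀ a : ι → ℕ, (∀ i, a i ≤ n) → f (fun i => X ^ a i) = g (fun i => X ^ a i))
    {p : ι → R[X]} (hp : ∀ i, (p i).natDegree ≤ n) : f p = g p := by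
  have hp_eq : p = fun i => ∑ a ∈ Finset.range (n + 1), (p i).coeff a • (X : R[X]) ^ a :=
    funext fun i => ((p i).as_sum_range' _ (Nat.lt_succ_of_le (hp i))).trans
      (sum_congr rfl fun _ _ => smul_X_eq_monomial.symm)
  rw [hp_eq, map_sum_finset, map_sum_finset]
  refine sum_congr rfl fun a ha => ?_
  rw [map_smul_univ, map_smul_univ, h a fun i => Nat.lt_succ_iff.mp
    (mem_range.mp (Fintype.mem_piFinset.mp ha i))]

noncomputable def wronskianAlternating (k : ℕ) : ℂ[X] [⋀^Fin k]→ₗ[ℂ] ℂ[X] where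
  toMultilinearMap := (Matrix.detRowAlternating.toMultilinearMap.restrictScalars ℂ).compLinearMap
    fun _ => LinearMap.pi fun j : Fin k => derivative ^ (j : ℕ)
  map_eq_zero_of_eq' v i j h hij :=
    Matrix.detRowAlternating.map_eq_zero_of_eq _ (by simp [h]) hij

theorem coe_wronskianAlternating (k : ℕ) : ⇑(wronskianAlternating k) = wronskian' k := by
  funext p
  change Matrix.detRowAlternating _ = Matrix.detRowAlternating _
  congr 1
  ext i j
  simp [Module.End.pow_apply]

noncomputable def invActLinear (n : ℕ) : ℂ[X] →ₗ[ℂ] ℂ[X] where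
  toFun := invAct n
  map_add' p q := by simp [invAct, mul_add, add_mul, sum_add_distrib]
  map_smul' c p := by simp [invAct, smul_eq_C_mul, mul_sum, mul_left_comm, mul_assoc]

theorem coe_invActLinear (n : ℕ) : ⇑(invActLinear n) = invAct n := rfl

theorem invAct_C_mul_X_pow {n d : ℕ} (c : ℂ) (hd : d ≤ n) :
    invAct n (C c * X ^ d) = C ((-1) ^ d * c) * X ^ (n - d) := by
  rw [invAct, sum_eq_single_of_mem d (mem_range.mpr (Nat.lt_succ_of_le hd))]
  · simp
  · intro j _ hj
    simp [coeff_X_pow, hj]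

theorem X_pow_mul_wronskian'_X_pow (k : ℕ) (b : Fin k → ℕ) :
    X ^ (∑ i ∈ range k, i) * wronskian' k (fun i => X ^ b i) =
      C (Matrix.vandermonde fun i => (b i : ℂ)).det * X ^ (∑ i, b i) := by
  calc X ^ (∑ i ∈ range k, i) * wronskian' k (fun i => X ^ b i)
      = (∏ j : Fin k, X ^ (j : ℕ)) * wronskian' k (fun i => X ^ b i) := by
        rw [prod_pow_eq_pow_sum, Fin.sum_univ_eq_sum_range (fun i => i)]
    _ = (Matrix.of fun i j : Fin k => X ^ b i * C ((b i).descFactorial j : ℂ)).det := by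
        rw [wronskian', ← Matrix.det_mul_row]
        congr 1
        ext i j
        simp only [Matrix.of_apply]
        rw [X_pow_mul_iterate_derivative_X_pow, mul_comm]
    _ = (∏ i, X ^ b i) * (Matrix.of fun i j : Fin k => C ((b i).descFactorial j : ℂ)).det :=
        Matrix.det_mul_column _ _
    _ = C (Matrix.vandermonde fun i => (b i : ℂ)).det * X ^ (∑ i, b i) := by
        rw [prod_pow_eq_pow_sum, ← Matrix.det_descFactorial_eq_det_vandermonde,
          RingHom.map_det, mul_comm]
        rfl

theorem wronskian'_X_pow_of_injective {k : ℕ} {b : Fin k → ℕ} (hb : Function.Injective b) :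
    wronskian' k (fun i => X ^ b i) =
      C (Matrix.vandermonde fun i => (b i : ℂ)).det * X ^ (∑ i, b i - ∑ i ∈ range k, i) := by
  apply mul_left_cancel₀ (pow_ne_zero (∑ i ∈ range k, i) (X_ne_zero (R := ℂ)))
  rw [X_pow_mul_wronskian'_X_pow, mul_left_comm, ← pow_add,
    Nat.add_sub_cancel' (sum_range_id_le_sum_of_injective hb)]

theorem wronskian'_invAct_X_pow {k n : ℕ} (hk : k ≤ n + 1) {a : Fin k → ℕ} (ha : ∀ i, a i ≤ n) :
    wronskian' k (fun i => invAct n (X ^ a i)) =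
      invAct (k * (n + 1 - k)) (wronskian' k fun i => X ^ a i) := by
  by_cases hinj : Function.Injective a
  swap
  · obtain ⟨i, j, hij, hne⟩ := Function.not_injective_iff.mp hinj
    rw [← coe_wronskianAlternating,
      (wronskianAlternating k).map_eq_zero_of_eq _ (by simp only [hij]) hne,
      (wronskianAlternating k).map_eq_zero_of_eq _ (by simp only [hij]) hne]
    exact (invActLinear _).map_zero.symm
  set K := ∑ i ∈ range k, i
  set S := ∑ i, a i
  have hinj_rev : Function.Injective fun i => n - a i := fun i j h => by
    have := ha i; have := ha j; exact hinj (by simp only at h; omega)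
  have hKS : K ≤ S := sum_range_id_le_sum_of_injective hinj
  have hKB : K ≤ ∑ i, (n - a i) := sum_range_id_le_sum_of_injective hinj_rev
  have hBS : ∑ i, (n - a i) + S = k * n := by
    rw [← sum_add_distrib, sum_congr rfl fun i _ => Nat.sub_add_cancel (ha i)]
    simp
  have hK : K * 2 + k = k * k := by
    rw [sum_range_id_mul_two, Nat.mul_sub_one, Nat.sub_add_cancel (Nat.le_mul_self k)]
  have hm : k * (n + 1 - k) + k * k = k * n + k := by
    rw [← mul_add, Nat.sub_add_cancel hk, mul_add_one]
  have hdeg : S - K ≤ k * (n + 1 - k) := by omega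
  have hexp : ∑ i, (n - a i) - K = k * (n + 1 - k) - (S - K) := by omega
  have hsign : (-1 : ℂ) ^ S * (-1) ^ K = (-1) ^ (S - K) := by
    obtain ⟨d, hd⟩ := Nat.exists_eq_add_of_le hKS
    rw [hd, Nat.add_sub_cancel_left, ← pow_add, add_right_comm, ← two_mul, pow_add, pow_mul]
    simp
  have hinv : ∀ i, invAct n (X ^ a i) = (-1 : ℂ) ^ a i • X ^ (n - a i) := fun i => by
    simpa [smul_eq_C_mul] using invAct_C_mul_X_pow 1 (ha i)
  have hcast : (fun i => ((n - a i : ℕ) : ℂ)) = fun i => (n : ℂ) - a i :=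
    funext fun i => Nat.cast_sub (ha i)
  simp only [hinv, ← coe_wronskianAlternating, AlternatingMap.map_smul_univ]
  rw [coe_wronskianAlternating, wronskian'_X_pow_of_injective hinj_rev,
    wronskian'_X_pow_of_injective hinj, invAct_C_mul_X_pow _ hdeg, hexp, hcast,
    Matrix.det_vandermonde_const_sub, prod_pow_eq_pow_sum, smul_eq_C_mul, ← mul_assoc, ← C_mul,
    ← mul_assoc, ← hsign]

/-- inversion equivariance of the Wronskian: for `p_1, …, p_k ∈ P_n`,
`ℓ = n + 1 − k`, and `p̂_i(ẑ) = ẑ^n p_i(−1/ẑ)`, one has, as polynomials in `ẑ`,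
`W(p̂_1, …, p̂_k)(ẑ) = ẑ^{kℓ} W(p_1, …, p_k)(−1/ẑ)`; the right-hand side is the
inversion action at level `kℓ` applied to `W(p_1, …, p_k) ∈ P_{kℓ}`. -/
theorem wronskian_inversion_equivariant (k n : ℕ) (hk : k ≤ n + 1)
    (p : Fin k → Polynomial ℂ) (hdeg : ∀ i, (p i).natDegree ≤ n) :
    wronskian' k (fun i => invAct n (p i)) =
      invAct (k * (n + 1 - k)) (wronskian' k p) := by
  classical
  have key := MultilinearMap.eq_of_forall_X_pow_eq
    (f := ((wronskianAlternating k).compLinearMap (invActLinear n)).toMultilinearMap)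
    (g := ((invActLinear _).compAlternatingMap (wronskianAlternating k)).toMultilinearMap)
    (fun a ha => by
      simpa only [AlternatingMap.coe_multilinearMap, AlternatingMap.compLinearMap_apply,
        LinearMap.compAlternatingMap_apply, coe_invActLinear, coe_wronskianAlternating] using
        wronskian'_invAct_X_pow hk ha) hdeg
  simpa only [AlternatingMap.coe_multilinearMap, AlternatingMap.compLinearMap_apply,
    LinearMap.compAlternatingMap_apply, coe_invActLinear, coe_wronskianAlternating] using key
end

section
/- Full SL₂-equivariance of the Wronski map: for p_1, …, p_k ∈ P_n, a fractional linear transformation z = (aẑ + b)/(cẑ + d) with ad − bc = 1, and p̂_i(ẑ) = (cẑ + d)^n p_i((aẑ+b)/(cẑ+d)), one has W(p̂_1, …, p̂_k)(ẑ) = (cẑ + d)^{kℓ} W(p_1, …, p_k)((aẑ+b)/(cẑ+d)), where ℓ = n + 1 − k. -/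
/-!
Write `q = cX + d`, `φ = (aX + b)/(cX + d)` and `T_s` for `sl2Act a b c d s`. Wherever
`q(z) ≠ 0`, `T_s h` is the function `q^s · (h ∘ φ)` and `φ' = q⁻²`, so the chain rule gives
`q · (T_{s+1} h)' = T_s h' + (s+1) c · T_{s+1} h`. Iterating, `q^j (T_n h)^{(j)}` is
`T_{n-j} h^{(j)}` plus a combination of the `T_{n-m} h^{(m)}`, `m < j`, with coefficients
independent of `h`. So after scaling column `j` by `q^j`, the Wronski matrix of the `T_n p_i` is a
unitriangular column operation away from `(T_{n-j} p_i^{(j)})`, whose determinant is `T_D W(p)`,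
`D = ∑_{j<k} (n - j)`, as one sees by evaluating. Hence `q^e W(T_n p) = T_D W(p)` with
`e = k(k-1)/2` and `D = kℓ + e`. Cancelling `q^e` needs `deg W(p) ≤ kℓ`: for the inversion
`z ↦ -1/z` the right-hand side lists the coefficients of `W(p)` backwards from degree `D`, while
the left-hand side is divisible by `X^e`.
-/

open Polynomial Finset

/-- The `SL₂(ℂ)` action on `P_n`: the polynomial `ẑ ↦ (cẑ + d)^n p((aẑ + b)/(cẑ + d))`. -/
noncomputable def sl2Act (a b c d : ℂ) (n : ℕ) (p : Polynomial ℂ) : Polynomial ℂ :=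
  ∑ j ∈ Finset.range (n + 1),
    C (p.coeff j) * (C a * X + C b) ^ j * (C c * X + C d) ^ (n - j)

lemma natDegree_det_le_of_forall_col_le {ι R : Type*} [Fintype ι] [DecidableEq ι] [CommRing R]
    (M : Matrix ι ι R[X]) (e : ι → ℕ) (h : ∀ i j, (M i j).natDegree ≤ e j) :
    M.det.natDegree ≤ ∑ j, e j := by
  rw [Matrix.det_apply]
  refine natDegree_sum_le_of_forall_le _ _ fun σ _ => ?_
  rw [Units.smul_def]
  exact (natDegree_smul_le _ _).trans
    ((natDegree_prod_le _ _).trans (sum_le_sum fun j _ => h _ _))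

lemma natDegree_iterate_derivative_le_sub {f : ℂ[X]} {n : ℕ} (hf : f.natDegree ≤ n) (m : ℕ) :
    (derivative^[m] f).natDegree ≤ n - m :=
  (natDegree_iterate_derivative f m).trans (Nat.sub_le_sub_right hf m)

lemma wronskian'_eq_det (k : ℕ) (p : Fin k → ℂ[X]) :
    wronskian' k p = (Matrix.of fun i j : Fin k => derivative^[j] (p i)).det :=
  rfl

lemma natDegree_wronskian'_le {k n : ℕ} {p : Fin k → ℂ[X]} (hdeg : ∀ i, (p i).natDegree ≤ n) :
    (wronskian' k p).natDegree ≤ ∑ j : Fin k, (n - j) :=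
  natDegree_det_le_of_forall_col_le _ _ fun i j => natDegree_iterate_derivative_le_sub (hdeg i) j

lemma pow_succ_mul_iterate_derivative_succ (c d : ℂ) (j : ℕ) (F : ℂ[X]) :
    (C c * X + C d) ^ (j + 1) * derivative^[j + 1] F =
      (C c * X + C d) * derivative ((C c * X + C d) ^ j * derivative^[j] F) -
        C (j * c) * ((C c * X + C d) ^ j * derivative^[j] F) := by
  rw [derivative_mul, Function.iterate_succ_apply']
  cases j with
  | zero => simp
  | succ j => simp [derivative_pow_succ]; ring

/-- The coefficients of `q^j (T_n h)^{(j)}` in the `T_{n-m} h^{(m)}`; the recursion is the effect of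
`F ↦ q F' - j c F`. -/
noncomputable def sl2ActDerivCoeff (n : ℕ) (c : ℂ) : ℕ → ℕ → ℂ
  | 0, 0 => 1
  | 0, _ + 1 => 0
  | j + 1, 0 => ((n : ℂ) - j) * c * sl2ActDerivCoeff n c j 0
  | j + 1, m + 1 =>
    ((n : ℂ) - j - (m + 1)) * c * sl2ActDerivCoeff n c j (m + 1) + sl2ActDerivCoeff n c j m

lemma sl2ActDerivCoeff_eq_zero_of_lt (n : ℕ) (c : ℂ) {j m : ℕ} (hjm : j < m) :
    sl2ActDerivCoeff n c j m = 0 := by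
  induction j generalizing m with
  | zero => obtain ⟨m, rfl⟩ := Nat.exists_eq_succ_of_ne_zero hjm.ne'; rfl
  | succ j ih =>
    obtain ⟨m, rfl⟩ := Nat.exists_eq_succ_of_ne_zero (Nat.ne_zero_of_lt hjm)
    simp [sl2ActDerivCoeff, ih (by omega : j < m + 1), ih (by omega : j < m)]

lemma sl2ActDerivCoeff_self (n : ℕ) (c : ℂ) (j : ℕ) : sl2ActDerivCoeff n c j j = 1 := by
  induction j with
  | zero => rfl
  | succ j ih =>
    simp [sl2ActDerivCoeff, ih, sl2ActDerivCoeff_eq_zero_of_lt n c (Nat.lt_succ_self j)]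

lemma sum_sl2ActDerivCoeff_succ (n : ℕ) (c : ℂ) (j : ℕ) (U : ℕ → ℂ[X]) :
    ∑ m ∈ range (j + 2), C (sl2ActDerivCoeff n c (j + 1) m) * U m =
      ∑ m ∈ range (j + 1), C (sl2ActDerivCoeff n c j m) *
        (U (m + 1) + C (((n : ℂ) - j - m) * c) * U m) := by
  set V : ℕ → ℂ[X] := fun m => C (((n : ℂ) - j - m) * c * sl2ActDerivCoeff n c j m) * U m
  have hV : ∑ m ∈ range (j + 2), V m = ∑ m ∈ range (j + 1), V m := by
    simp [V, sum_range_succ _ (j + 1), sl2ActDerivCoeff_eq_zero_of_lt n c (Nat.lt_succ_self j)]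
  calc ∑ m ∈ range (j + 2), C (sl2ActDerivCoeff n c (j + 1) m) * U m
      = ∑ m ∈ range (j + 1), C (sl2ActDerivCoeff n c j m) * U (m + 1) +
          ∑ m ∈ range (j + 2), V m := by
        rw [sum_range_succ', sum_range_succ' V, ← add_assoc, ← sum_add_distrib]
        congr 1
        · refine sum_congr rfl fun m _ => ?_
          simp only [V, sl2ActDerivCoeff, Nat.cast_add, Nat.cast_one, C_add, add_mul]
          ring
        · simp [V, sl2ActDerivCoeff]
    _ = _ := by
        rw [hV, ← sum_add_distrib]
        refine sum_congr rfl fun m _ => ?_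
        simp only [V, C_mul]
        ring

lemma sum_fin_sub_eq {k n : ℕ} (hk : k ≤ n + 1) :
    ∑ j : Fin k, (n - j) = k * (n + 1 - k) + ∑ j : Fin k, (j : ℕ) := by
  rw [Fin.sum_univ_eq_sum_range (n - ·), Fin.sum_univ_eq_sum_range (·)]
  induction k with
  | zero => simp
  | succ k ih =>
    obtain ⟨l, rfl⟩ := Nat.exists_eq_add_of_le (by omega : k ≤ n)
    rw [sum_range_succ, sum_range_succ, ih (by omega), show k + l + 1 - k = l + 1 by omega,
      show k + l + 1 - (k + 1) = l by omega, show k + l - k = l by omega]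
    ring

section

variable {a b c d : ℂ}

lemma C_mul_X_add_C_ne_zero (hcd : c ≠ 0 ∨ d ≠ 0) : C c * X + C d ≠ 0 := by
  intro h
  have h1 := congrArg (coeff · 1) h
  have h0 := congrArg (coeff · 0) h
  simp at h1 h0
  tauto

lemma eq_of_forall_eval_eq_of_mul_add_ne_zero (hcd : c ≠ 0 ∨ d ≠ 0) {f g : ℂ[X]}
    (h : ∀ z, c * z + d ≠ 0 → f.eval z = g.eval z) : f = g := by
  refine eq_of_infinite_eval_eq f g
    ((finite_setOfPred_isRoot (C_mul_X_add_C_ne_zero hcd)).infinite_compl.mono fun z hz => ?_)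
  exact h z (by simpa using hz)

lemma ne_zero_or_ne_zero_of_det_eq_one (hdet : a * d - b * c = 1) : c ≠ 0 ∨ d ≠ 0 := by
  by_contra! h
  simp [h.1, h.2] at hdet

lemma eval_sl2Act {n : ℕ} {h : ℂ[X]} (hh : h.natDegree ≤ n) {z : ℂ} (hz : c * z + d ≠ 0) :
    (sl2Act a b c d n h).eval z = (c * z + d) ^ n * h.eval ((a * z + b) / (c * z + d)) := by
  rw [sl2Act, eval_finsetSum, eval_eq_sum_range' (Nat.lt_succ_of_le hh), mul_sum]
  refine sum_congr rfl fun j hj => ?_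
  have hpow : (c * z + d) ^ n = (c * z + d) ^ (n - j) * (c * z + d) ^ j := by
    rw [← pow_add, Nat.sub_add_cancel (Nat.lt_succ_iff.mp (mem_range.mp hj))]
  simp only [eval_mul, eval_pow, eval_add, eval_C, eval_X, hpow, div_pow]
  linear_combination (-(h.coeff j * (a * z + b) ^ j * (c * z + d) ^ (n - j))) *
    inv_mul_cancel₀ (pow_ne_zero j hz)

lemma sl2Act_add {s : ℕ} (t : ℕ) {f : ℂ[X]} (hcd : c ≠ 0 ∨ d ≠ 0) (hf : f.natDegree ≤ s) :
    sl2Act a b c d (s + t) f = (C c * X + C d) ^ t * sl2Act a b c d s f := by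
  refine eq_of_forall_eval_eq_of_mul_add_ne_zero hcd fun z hz => ?_
  rw [eval_mul, eval_sl2Act hf hz, eval_sl2Act (hf.trans (s.le_add_right t)) hz]
  simp only [eval_pow, eval_add, eval_mul, eval_C, eval_X]
  ring

lemma hasDerivAt_mobius (hdet : a * d - b * c = 1) {z : ℂ} (hz : c * z + d ≠ 0) :
    HasDerivAt (fun w => (a * w + b) / (c * w + d)) (1 / (c * z + d) ^ 2) z := by
  have hnum : a * (c * z + d) - (a * z + b) * c = 1 := by linear_combination hdet
  simpa [hnum] using (((hasDerivAt_id z).const_mul a).add_const b).fun_div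
    (((hasDerivAt_id z).const_mul c).add_const d) hz

lemma mul_derivative_sl2Act (hdet : a * d - b * c = 1) {s : ℕ} {h : ℂ[X]}
    (hh : h.natDegree ≤ s + 1) :
    (C c * X + C d) * derivative (sl2Act a b c d (s + 1) h) =
      sl2Act a b c d s (derivative h) + C ((s + 1 : ℂ) * c) * sl2Act a b c d (s + 1) h := by
  refine eq_of_forall_eval_eq_of_mul_add_ne_zero
    (ne_zero_or_ne_zero_of_det_eq_one hdet) fun z hz => ?_
  have hloc : (fun w => (sl2Act a b c d (s + 1) h).eval w) =ᶠ[nhds z]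
      fun w => (c * w + d) ^ (s + 1) * h.eval ((a * w + b) / (c * w + d)) := by
    filter_upwards [(isOpen_ne_fun (f := fun w => c * w + d) (by fun_prop)
      continuous_const).mem_nhds hz] with w hw using eval_sl2Act hh hw
  have hderiv : HasDerivAt (fun w => (c * w + d) ^ (s + 1) * h.eval ((a * w + b) / (c * w + d)))
      _ z := ((((hasDerivAt_id z).const_mul c).add_const d).fun_pow (s + 1)).fun_mul
    ((h.hasDerivAt _).comp z (hasDerivAt_mobius hdet hz))
  rw [eval_mul, ← Polynomial.deriv, hloc.deriv_eq, hderiv.deriv]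
  simp only [eval_add, eval_mul, eval_C, eval_X, id, Nat.cast_add, Nat.cast_one,
    add_tsub_cancel_right]
  rw [eval_sl2Act ((natDegree_derivative_le h).trans (by omega)) hz, eval_sl2Act hh hz]
  field_simp
  ring

lemma mul_derivative_sl2Act_iterate_derivative (hdet : a * d - b * c = 1) {n m : ℕ} {h : ℂ[X]}
    (hh : h.natDegree ≤ n) (hm : m < n) (j : ℕ) :
    (C c * X + C d) * derivative (sl2Act a b c d (n - m) (derivative^[m] h)) -
        C (j * c) * sl2Act a b c d (n - m) (derivative^[m] h) =
      sl2Act a b c d (n - (m + 1)) (derivative^[m + 1] h) +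
        C (((n : ℂ) - j - m) * c) * sl2Act a b c d (n - m) (derivative^[m] h) := by
  obtain ⟨s, hs⟩ : ∃ s, n - m = s + 1 := ⟨n - m - 1, by omega⟩
  have hs' : n - (m + 1) = s := by omega
  have hcast : (n : ℂ) - j - m = s + 1 - j := by
    rw [sub_right_comm, ← Nat.cast_sub hm.le, hs]; push_cast; ring
  rw [hs, hs', hcast, Function.iterate_succ_apply',
    mul_derivative_sl2Act hdet (hs ▸ natDegree_iterate_derivative_le_sub hh m)]
  simp only [C_mul, C_add, C_sub, C_1]
  ring

lemma pow_mul_iterate_derivative_sl2Act (hdet : a * d - b * c = 1) {n : ℕ} {h : ℂ[X]}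
    (hh : h.natDegree ≤ n) {j : ℕ} (hj : j ≤ n) :
    (C c * X + C d) ^ j * derivative^[j] (sl2Act a b c d n h) =
      ∑ m ∈ range (j + 1),
        C (sl2ActDerivCoeff n c j m) * sl2Act a b c d (n - m) (derivative^[m] h) := by
  induction j with
  | zero => simp [sl2ActDerivCoeff]
  | succ j ih =>
    rw [pow_succ_mul_iterate_derivative_succ, ih (by omega), sum_sl2ActDerivCoeff_succ,
      derivative_sum, mul_sum, mul_sum, ← sum_sub_distrib]
    refine sum_congr rfl fun m hm => ?_
    rw [derivative_C_mul, ← mul_derivative_sl2Act_iterate_derivative hdet hh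
      (by simp at hm; omega) j]
    ring

lemma det_sl2Act_iterate_derivative (hcd : c ≠ 0 ∨ d ≠ 0) {k n : ℕ} {p : Fin k → ℂ[X]}
    (hdeg : ∀ i, (p i).natDegree ≤ n) :
    (Matrix.of fun i j : Fin k => sl2Act a b c d (n - j) (derivative^[j] (p i))).det =
      sl2Act a b c d (∑ j : Fin k, (n - j)) (wronskian' k p) := by
  refine eq_of_forall_eval_eq_of_mul_add_ne_zero hcd fun z hz => ?_
  rw [eval_sl2Act (natDegree_wronskian'_le hdeg) hz, wronskian'_eq_det, ← coe_evalRingHom,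
    ← coe_evalRingHom, RingHom.map_det, RingHom.map_det, ← prod_pow_eq_pow_sum,
    ← Matrix.det_mul_row]
  congr 1
  ext i j
  simp [eval_sl2Act (natDegree_iterate_derivative_le_sub (hdeg i) j) hz]

lemma pow_mul_wronskian'_sl2Act (hdet : a * d - b * c = 1) {k n : ℕ} (hk : k ≤ n + 1)
    {p : Fin k → ℂ[X]} (hdeg : ∀ i, (p i).natDegree ≤ n) :
    (C c * X + C d) ^ (∑ j : Fin k, (j : ℕ)) * wronskian' k (fun i => sl2Act a b c d n (p i)) =
      sl2Act a b c d (∑ j : Fin k, (n - j)) (wronskian' k p) := by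
  set A : Matrix (Fin k) (Fin k) ℂ[X] := Matrix.of fun m j => C (sl2ActDerivCoeff n c j m)
  have hA : A.det = 1 := by
    rw [Matrix.det_of_isUpperTriangular fun m j (hjm : j < m) => by
      simp [A, sl2ActDerivCoeff_eq_zero_of_lt n c hjm]]
    simp [A, sl2ActDerivCoeff_self]
  rw [← det_sl2Act_iterate_derivative (ne_zero_or_ne_zero_of_det_eq_one hdet) hdeg,
    ← mul_one (Matrix.det _), ← hA, ← Matrix.det_mul, wronskian'_eq_det, ← prod_pow_eq_pow_sum,
    ← Matrix.det_mul_row]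
  congr 1
  refine Matrix.ext fun i j => ?_
  simp only [A, Matrix.of_apply, Matrix.mul_apply]
  rw [pow_mul_iterate_derivative_sl2Act hdet (hdeg i) (by omega),
    Fin.sum_univ_eq_sum_range (fun m => sl2Act a b c d (n - m) (derivative^[m] (p i)) *
      C (sl2ActDerivCoeff n c j m)), ← sum_subset (range_subset_range.mpr j.isLt)]
  · simp_rw [mul_comm]
  · intro m _ hm
    simp [sl2ActDerivCoeff_eq_zero_of_lt n c (not_lt.mp (mt mem_range.mpr hm))]

end

lemma coeff_sl2Act_inversion {D m : ℕ} (hm : m ≤ D) (f : ℂ[X]) :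
    (sl2Act 0 (-1) 1 0 D f).coeff (D - m) = (-1) ^ m * f.coeff m := by
  have hterm : ∀ j, C (f.coeff j) * (C 0 * X + C (-1)) ^ j * (C 1 * X + C 0) ^ (D - j) =
      C ((-1) ^ j * f.coeff j) * X ^ (D - j) := fun j => by simp; ring
  simp only [sl2Act, hterm, finsetSum_coeff, coeff_C_mul_X_pow]
  rw [sum_eq_single_of_mem m (mem_range.mpr (Nat.lt_succ_of_le hm))]
  · simp
  · intro j hj hjm
    rw [if_neg (by simp at hj; omega)]

lemma natDegree_wronskian'_le_mul {k n : ℕ} (hk : k ≤ n + 1) {p : Fin k → ℂ[X]}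
    (hdeg : ∀ i, (p i).natDegree ≤ n) :
    (wronskian' k p).natDegree ≤ k * (n + 1 - k) := by
  have hsum := sum_fin_sub_eq hk
  rw [natDegree_le_iff_coeff_eq_zero]
  intro m hm
  by_cases hmD : ∑ j : Fin k, (n - j) < m
  · exact coeff_eq_zero_of_natDegree_lt ((natDegree_wronskian'_le hdeg).trans_lt hmD)
  have hcoeff := congrArg (coeff · (∑ j : Fin k, (n - j) - m))
    (pow_mul_wronskian'_sl2Act (a := 0) (b := -1) (c := 1) (d := 0) (by norm_num) hk hdeg)
  simp only [C_1, one_mul, C_0, add_zero, coeff_X_pow_mul',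
    coeff_sl2Act_inversion (not_lt.mp hmD)] at hcoeff
  rw [if_neg (by omega), eq_comm, mul_eq_zero] at hcoeff
  exact hcoeff.resolve_left (pow_ne_zero _ (by norm_num))

/-- full `SL₂`-equivariance of the Wronski map: for `p_1, …, p_k ∈ P_n`,
`ad − bc = 1`, `ℓ = n + 1 − k`, and `p̂_i(ẑ) = (cẑ+d)^n p_i((aẑ+b)/(cẑ+d))`, one has
`W(p̂_1, …, p̂_k)(ẑ) = (cẑ+d)^{kℓ} W(p_1, …, p_k)((aẑ+b)/(cẑ+d))`, the right-hand side
being the `SL₂` action at level `kℓ` applied to `W(p_1, …, p_k) ∈ P_{kℓ}`. -/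
theorem wronskian_sl2_equivariant (k n : ℕ) (hk : k ≤ n + 1)
    (a b c d : ℂ) (hdet : a * d - b * c = 1)
    (p : Fin k → Polynomial ℂ) (hdeg : ∀ i, (p i).natDegree ≤ n) :
    wronskian' k (fun i => sl2Act a b c d n (p i)) =
      sl2Act a b c d (k * (n + 1 - k)) (wronskian' k p) := by
  have hcd := ne_zero_or_ne_zero_of_det_eq_one hdet
  have hid := pow_mul_wronskian'_sl2Act hdet hk hdeg
  rw [sum_fin_sub_eq hk, sl2Act_add _ hcd (natDegree_wronskian'_le_mul hk hdeg)] at hid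
  exact mul_left_cancel₀ (pow_ne_zero _ (C_mul_X_add_C_ne_zero hcd)) hid
end

section
/- Let U ∈ G_k P_n with 0-pivot sequence ν_1 < ⋯ < ν_k and ∞-pivot sequence ν̂_1 < ⋯ < ν̂_k. Then ν_j ≤ ν̂_j for every j = 1, …, k, and if ν_j = ν̂_j for some j, then the monomial z^{ν_j} belongs to U. -/
open Polynomial

/-- Nonzero polynomials with pairwise distinct trailing degrees are linearly independent. -/
lemma li_of_trailing {ι : Type*} (f : ι → Polynomial ℂ) (h0 : ∀ i, f i ≠ 0)
    (hinj : Function.Injective fun i => (f i).natTrailingDegree) :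
    LinearIndependent ℂ f := by
  rw [linearIndependent_iff']
  intro s g hsum i hi
  by_contra hgi
  classical
  set t := s.filter (fun i => g i ≠ 0) with ht
  have hit : i ∈ t := Finset.mem_filter.2 ⟨hi, hgi⟩
  obtain ⟨i0, hi0, hmin⟩ := t.exists_min_image (fun i => (f i).natTrailingDegree) ⟨i, hit⟩
  have hi0s : i0 ∈ s := (Finset.mem_filter.1 hi0).1
  have hgi0 : g i0 ≠ 0 := (Finset.mem_filter.1 hi0).2
  set d := (f i0).natTrailingDegree with hd
  have h1 : ∑ b ∈ s, g b * (f b).coeff d = 0 := by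
    have := congrArg (fun p => Polynomial.coeff p d) hsum
    simpa [Polynomial.finset_sum_coeff] using this
  rw [Finset.sum_eq_single i0 (fun b hb hbne => by
    by_cases hgb : g b = 0
    · simp [hgb]
    · have hbt : b ∈ t := Finset.mem_filter.2 ⟨hb, hgb⟩
      have hle : d ≤ (f b).natTrailingDegree := hmin b hbt
      have hne : (f b).natTrailingDegree ≠ d := fun h => hbne (hinj h)
      have : d < (f b).natTrailingDegree := lt_of_le_of_ne hle (Ne.symm hne)
      rw [coeff_eq_zero_of_lt_natTrailingDegree this, mul_zero])
    (fun h => absurd hi0s h)] at h1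
  exact hgi0 (by
    have := trailingCoeff_nonzero_iff_nonzero.2 (h0 i0)
    exact (mul_eq_zero.1 h1).resolve_right this)

/-- If all degrees of nonzero elements of `W` belong to a finset `S`,
then the dimension of `W` is at most `S.card`. -/
lemma finrank_le_card_degrees (W : Submodule ℂ (Polynomial ℂ)) (S : Finset ℕ)
    (hS : ∀ q ∈ W, q ≠ 0 → Polynomial.natDegree q ∈ S) :
    Module.finrank ℂ W ≤ S.card := by
  classical
  let T : W →ₗ[ℂ] (S → ℂ) := LinearMap.pi fun d => (Polynomial.lcoeff ℂ (d : ℕ)).comp W.subtype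
  have hT : Function.Injective T := by
    rw [← LinearMap.ker_eq_bot, LinearMap.ker_eq_bot']
    intro q hq
    by_contra hq0
    have hq0' : (q : Polynomial ℂ) ≠ 0 := fun h => hq0 (Subtype.ext h)
    have hd : (q : Polynomial ℂ).natDegree ∈ S := hS q q.2 hq0'
    have := congrFun hq ⟨_, hd⟩
    simp only [T, LinearMap.pi_apply, LinearMap.comp_apply, Submodule.subtype_apply,
      lcoeff_apply, Pi.zero_apply] at this
    exact Polynomial.leadingCoeff_ne_zero.2 hq0' this
  have := LinearMap.finrank_le_finrank_of_injective hT
  simpa [Module.finrank_pi] using this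


/-- let `U ∈ G_k P_n` with `0`-pivot sequence `ν_1 < ⋯ < ν_k` (the set of
orders at `0` of nonzero elements of `U`) and `∞`-pivot sequence `ν̂_1 < ⋯ < ν̂_k`
(the set of degrees of nonzero elements of `U`).  Then `ν_j ≤ ν̂_j` for all `j`, and if
`ν_j = ν̂_j` for some `j`, then the monomial `z^{ν_j}` belongs to `U`. -/
theorem pivot_comparison (k n : ℕ) (U : Submodule ℂ (Polynomial ℂ))
    (hUn : U ≤ Polynomial.degreeLE ℂ (n : ℕ)) (hdim : Module.finrank ℂ U = k)
    (ν : Fin k → ℕ) (hν : StrictMono ν)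
    (hpiv : ∀ m : ℕ,
      (∃ q ∈ U, q ≠ 0 ∧ Polynomial.rootMultiplicity 0 q = m) ↔ m ∈ Set.range ν)
    (ν' : Fin k → ℕ) (hν' : StrictMono ν')
    (hpiv' : ∀ m : ℕ, (∃ q ∈ U, q ≠ 0 ∧ q.natDegree = m) ↔ m ∈ Set.range ν') :
    ∀ j : Fin k, ν j ≤ ν' j ∧ (ν j = ν' j → (X : Polynomial ℂ) ^ ν j ∈ U) := by
  classical
  -- choose pivot polynomials for the 0-pivots
  have hp : ∀ i : Fin k, ∃ q, q ∈ U ∧ q ≠ 0 ∧ q.natTrailingDegree = ν i := by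
    intro i
    obtain ⟨q, hqU, hq0, hqm⟩ := (hpiv (ν i)).2 ⟨i, rfl⟩
    exact ⟨q, hqU, hq0, by rw [← rootMultiplicity_eq_natTrailingDegree', hqm]⟩
  choose p hpU hp0 hptd using hp
  -- finite dimensionality
  haveI : FiniteDimensional ℂ (Polynomial.degreeLE ℂ (n : ℕ)) := by
    rw [degreeLE_eq_span_X_pow]
    infer_instance
  intro j
  set m := ν j with hm
  -- the subspace of elements of U vanishing to order ≥ m at 0
  set W : Submodule ℂ (Polynomial ℂ) :=
    U ⊓ ⨅ d ∈ Finset.range m, LinearMap.ker (Polynomial.lcoeff ℂ d) with hW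
  have hmemW : ∀ q : Polynomial ℂ, q ∈ W ↔ q ∈ U ∧ ∀ d < m, q.coeff d = 0 := by
    intro q
    simp [hW, Submodule.mem_inf, Submodule.mem_iInf, LinearMap.mem_ker, lcoeff_apply,
      Finset.mem_range]
  have hWU : W ≤ U := inf_le_left
  haveI : FiniteDimensional ℂ W := Submodule.finiteDimensional_of_le (hWU.trans hUn)
  -- trailing degree bound in W
  have htdW : ∀ q ∈ W, q ≠ 0 → m ≤ q.natTrailingDegree := by
    intro q hq hq0
    exact le_natTrailingDegree hq0 ((hmemW q).1 hq).2
  -- lower bound on dim W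
  have hlow : k - (j : ℕ) ≤ Module.finrank ℂ W := by
    have hjk : (j : ℕ) < k := j.isLt
    set g : Fin (k - (j : ℕ)) → Polynomial ℂ := fun i => p ⟨(j : ℕ) + i, by omega⟩ with hg
    have hgW : ∀ i, g i ∈ W := by
      intro i
      rw [hmemW]
      refine ⟨hpU _, fun d hd => ?_⟩
      apply coeff_eq_zero_of_lt_natTrailingDegree
      rw [hptd]
      have : m ≤ ν ⟨(j : ℕ) + i, by omega⟩ := by
        apply hν.monotone
        rw [Fin.le_def]
        exact Nat.le_add_right _ _
      omega
    have li : LinearIndependent ℂ g := by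
      apply li_of_trailing _ (fun i => hp0 _)
      intro i1 i2 h
      simp only [hg, hptd] at h
      have := hν.injective h
      have h2 := congrArg Fin.val this
      simp only at h2
      omega
    have li' : LinearIndependent ℂ (fun i => (⟨g i, hgW i⟩ : W)) :=
      LinearIndependent.of_comp W.subtype li
    simpa using li'.fintype_card_le_finrank
  -- first part: ν j ≤ ν' j
  have hdegW : ∀ q ∈ W, q ≠ 0 → ∃ i : Fin k, ν' i = q.natDegree ∧ m ≤ ν' i := by
    intro q hq hq0
    obtain ⟨i, hi⟩ := (hpiv' q.natDegree).1 ⟨q, hWU hq, hq0, rfl⟩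
    refine ⟨i, hi, ?_⟩
    rw [hi]
    exact (htdW q hq hq0).trans (natTrailingDegree_le_natDegree q)
  have hle : ν j ≤ ν' j := by
    by_contra hlt
    push_neg at hlt
    have hS : ∀ q ∈ W, q ≠ 0 → q.natDegree ∈ (Finset.Ioi j).image ν' := by
      intro q hq hq0
      obtain ⟨i, hi, him⟩ := hdegW q hq hq0
      refine Finset.mem_image.2 ⟨i, Finset.mem_Ioi.2 ?_, hi⟩
      rw [← hν'.lt_iff_lt]
      omega
    have := finrank_le_card_degrees W _ hS
    have hcard : ((Finset.Ioi j).image ν').card ≤ k - 1 - (j : ℕ) := by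
      calc ((Finset.Ioi j).image ν').card ≤ (Finset.Ioi j).card := Finset.card_image_le
        _ = k - 1 - (j : ℕ) := Fin.card_Ioi j
    have hjk : (j : ℕ) < k := j.isLt
    omega
  refine ⟨hle, fun heq => ?_⟩
  -- equality case
  have hjk : (j : ℕ) < k := j.isLt
  have hex : ∃ q ∈ W, q ≠ 0 ∧ q.natDegree = m := by
    by_contra hne
    push_neg at hne
    have hS : ∀ q ∈ W, q ≠ 0 → q.natDegree ∈ ((Finset.Ici j).image ν').erase m := by
      intro q hq hq0
      obtain ⟨i, hi, him⟩ := hdegW q hq hq0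
      refine Finset.mem_erase.2 ⟨hne q hq hq0, ?_⟩
      refine Finset.mem_image.2 ⟨i, Finset.mem_Ici.2 ?_, hi⟩
      rw [← hν'.le_iff_le]
      omega
    have h1 := finrank_le_card_degrees W _ hS
    have hmmem : m ∈ (Finset.Ici j).image ν' :=
      Finset.mem_image.2 ⟨j, Finset.mem_Ici.2 le_rfl, heq.symm⟩
    have h2 : (((Finset.Ici j).image ν').erase m).card = ((Finset.Ici j).image ν').card - 1 :=
      Finset.card_erase_of_mem hmmem
    have h3 : ((Finset.Ici j).image ν').card = k - (j : ℕ) := by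
      rw [Finset.card_image_of_injective _ hν'.injective, Fin.card_Ici]
    omega
  obtain ⟨q, hqW, hq0, hqd⟩ := hex
  have htd : q.natTrailingDegree = m :=
    le_antisymm (hqd ▸ natTrailingDegree_le_natDegree q) (htdW q hqW hq0)
  have hc : q.coeff m ≠ 0 := by
    rw [← htd]
    exact trailingCoeff_nonzero_iff_nonzero.2 hq0
  have hXq : (X : Polynomial ℂ) ^ m = (q.coeff m)⁻¹ • q := by
    ext d
    rw [coeff_smul, coeff_X_pow]
    rcases lt_trichotomy d m with h | h | h
    · rw [if_neg (by omega : ¬ d = m),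
        show q.coeff d = 0 from coeff_eq_zero_of_lt_natTrailingDegree (by omega), smul_zero]
    · subst h
      rw [if_pos rfl, smul_eq_mul, inv_mul_cancel₀ hc]
    · rw [if_neg (by omega : ¬ d = m),
        show q.coeff d = 0 from coeff_eq_zero_of_natDegree_lt (by omega), smul_zero]
  rw [hXq]
  exact U.smul_mem _ (hWU hqW)
end

section
/- A k-dimensional polynomial subspace U ⊆ P_n is spanned by monomials if and only if its 0-pivot sequence equals its ∞-pivot sequence, i.e., the set of orders at 0 of nonzero elements of U coincides with the set of degrees of nonzero elements of U. -/
/-!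
If `U` is spanned by monomials `X ^ m`, `m ∈ S`, then every element of `U` is supported in `S`,
so its order and its degree both lie in `S`, and both sets equal `S`.

Conversely, suppose every degree `d` occurring in `U` is also an order. Descending through the
degrees, `X ^ m ∈ U` for each such `m`: take `p ∈ U` of order `m` and strip off its leading terms,
each of which is a monomial `X ^ d` with `d > m` already known to lie in `U`; what remains has
degree equal to its order `m`, i.e. is a multiple of `X ^ m`. Once all these monomials lie in `U`,
stripping leading terms of an arbitrary `q ∈ U` writes it in their span.
-/

open Polynomial Module

namespace Polynomial

section Semiring

variable {R : Type*} [Semiring R] {p : R[X]}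

theorem eraseLead_eq_zero_of_natDegree_le_natTrailingDegree
    (h : p.natDegree ≤ p.natTrailingDegree) : p.eraseLead = 0 := by
  ext i
  rw [coeff_zero]
  rcases eq_or_ne i p.natDegree with rfl | hi
  · exact eraseLead_coeff_natDegree
  · rw [eraseLead_coeff_of_ne i hi]
    by_contra hc
    exact hi (le_antisymm (le_natDegree_of_ne_zero hc)
      (h.trans (natTrailingDegree_le_of_ne_zero hc)))

theorem natTrailingDegree_eraseLead (h : p.natTrailingDegree < p.natDegree) :
    p.eraseLead.natTrailingDegree = p.natTrailingDegree := by
  have hcoeff : p.eraseLead.coeff p.natTrailingDegree ≠ 0 := by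
    rw [eraseLead_coeff_of_ne _ h.ne, ← trailingCoeff]
    exact trailingCoeff_nonzero_iff_nonzero.mpr (ne_zero_of_natDegree_gt h)
  refine le_antisymm (natTrailingDegree_le_of_ne_zero hcoeff) ?_
  refine le_natTrailingDegree (fun h0 => hcoeff (by rw [h0, coeff_zero])) fun i hi => ?_
  rw [eraseLead_coeff_of_ne _ (by omega)]
  exact coeff_eq_zero_of_lt_natTrailingDegree hi

variable (R) in
noncomputable def monomialSpan (S : Set ℕ) : Submodule R R[X] :=
  Submodule.span R ((fun m => X ^ m) '' S)

theorem mem_monomialSpan_iff {S : Set ℕ} {q : R[X]} :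
    q ∈ monomialSpan R S ↔ ∀ i ∉ S, q.coeff i = 0 := by
  constructor
  · intro hq i hi
    induction hq using Submodule.span_induction with
    | mem x hx =>
      obtain ⟨m, hm, rfl⟩ := hx
      rw [coeff_X_pow, if_neg (by rintro rfl; exact hi hm)]
    | zero => exact coeff_zero i
    | add x y _ _ hx hy => rw [coeff_add, hx, hy, add_zero]
    | smul a x _ hx => rw [coeff_smul, hx, smul_zero]
  · intro hq
    rw [as_sum_support q]
    refine Submodule.sum_mem _ fun i hi => ?_
    have hiS : i ∈ S := by_contra fun h => mem_support_iff.mp hi (hq i h)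
    rw [← C_mul_X_pow_eq_monomial, ← smul_eq_C_mul]
    exact Submodule.smul_mem _ _ (Submodule.subset_span ⟨i, hiS, rfl⟩)

/-- The `0`-pivots of `U`; `degreeSet U` below is its set of `∞`-pivots. -/
def trailingDegreeSet (U : Submodule R R[X]) : Set ℕ :=
  {m | ∃ q ∈ U, q ≠ 0 ∧ q.natTrailingDegree = m}

def degreeSet (U : Submodule R R[X]) : Set ℕ :=
  {m | ∃ q ∈ U, q ≠ 0 ∧ q.natDegree = m}

theorem X_pow_mem_monomialSpan {S : Set ℕ} {m : ℕ} (hm : m ∈ S) :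
    (X ^ m : R[X]) ∈ monomialSpan R S :=
  Submodule.subset_span ⟨m, hm, rfl⟩

theorem degreeSet_subset_Iic {n : ℕ} {U : Submodule R R[X]} (hUn : U ≤ degreeLE R n) :
    degreeSet U ⊆ Set.Iic n := by
  rintro _ ⟨q, hq, -, rfl⟩
  exact natDegree_le_iff_degree_le.mpr (mem_degreeLE.mp (hUn hq))

variable [Nontrivial R]

theorem trailingDegreeSet_monomialSpan (S : Set ℕ) :
    trailingDegreeSet (monomialSpan R S) = S := by
  ext m
  constructor
  · rintro ⟨q, hq, hq0, rfl⟩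
    by_contra hm
    exact trailingCoeff_nonzero_iff_nonzero.mpr hq0 (mem_monomialSpan_iff.mp hq _ hm)
  · intro hm
    exact ⟨X ^ m, X_pow_mem_monomialSpan hm, (monic_X_pow m).ne_zero, natTrailingDegree_X_pow m⟩

theorem degreeSet_monomialSpan (S : Set ℕ) : degreeSet (monomialSpan R S) = S := by
  ext m
  constructor
  · rintro ⟨q, hq, hq0, rfl⟩
    by_contra hm
    exact leadingCoeff_ne_zero.mpr hq0 (mem_monomialSpan_iff.mp hq _ hm)
  · intro hm
    exact ⟨X ^ m, X_pow_mem_monomialSpan hm, (monic_X_pow m).ne_zero, natDegree_X_pow m⟩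

end Semiring

section Ring

variable {R : Type*} [Ring R] {U : Submodule R R[X]}

theorem eraseLead_mem {p : R[X]} (hp : p ∈ U) (hX : X ^ p.natDegree ∈ U) :
    p.eraseLead ∈ U := by
  rw [← self_sub_monomial_natDegree_leadingCoeff, ← C_mul_X_pow_eq_monomial, ← smul_eq_C_mul]
  exact U.sub_mem hp (U.smul_mem _ hX)

theorem eq_monomialSpan_degreeSet (hX : ∀ m ∈ degreeSet U, X ^ m ∈ U) :
    U = monomialSpan R (degreeSet U) := by
  refine le_antisymm (fun q hq => ?_) (Submodule.span_le.mpr ?_)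
  · induction hd : q.natDegree using Nat.strong_induction_on generalizing q with
    | _ d ih =>
    by_cases hq0 : q = 0
    · rw [hq0]
      exact zero_mem _
    have hdS : d ∈ degreeSet U := ⟨q, hq, hq0, hd⟩
    have hlead : monomial d q.leadingCoeff ∈ monomialSpan R (degreeSet U) := by
      rw [← C_mul_X_pow_eq_monomial, ← smul_eq_C_mul]
      exact Submodule.smul_mem _ _ (X_pow_mem_monomialSpan hdS)
    rw [← eraseLead_add_monomial_natDegree_leadingCoeff q, hd]
    refine add_mem ?_ hlead
    rcases q.eraseLead_natDegree_lt_or_eraseLead_eq_zero with hlt | h0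
    · exact ih _ (hd ▸ hlt) _ (eraseLead_mem hq (hd ▸ hX d hdS)) rfl
    · rw [h0]
      exact zero_mem _
  · rintro _ ⟨m, hm, rfl⟩
    exact hX m hm

theorem finrank_monomialSpan [StrongRankCondition R] (T : Finset ℕ) :
    finrank R (monomialSpan R T) = T.card := by
  have := nontrivial_of_invariantBasisNumber R
  have hX : LinearIndependent R fun m : ℕ => (X ^ m : R[X]) := by
    simpa [monomial_one_right_eq_X_pow] using (basisMonomials R).linearIndependent
  have hli : LinearIndependent R fun i : (T : Set ℕ) => (X ^ (i : ℕ) : R[X]) :=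
    hX.comp _ Subtype.val_injective
  rw [monomialSpan, Set.image_eq_range, finrank_span_eq_card hli]
  simp

end Ring

section Field

variable {K : Type*} [Field K] {U : Submodule K K[X]}

theorem X_pow_mem_of_natTrailingDegree_eq {m : ℕ} (hU : ∀ d ∈ degreeSet U, m < d → X ^ d ∈ U)
    {p : K[X]} (hp : p ∈ U) (hp0 : p ≠ 0) (hm : p.natTrailingDegree = m) : X ^ m ∈ U := by
  induction hd : p.natDegree using Nat.strong_induction_on generalizing p with
  | _ d ih =>
  rcases (hm ▸ hd ▸ p.natTrailingDegree_le_natDegree : m ≤ d).eq_or_lt with rfl | hlt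
  · have hlead : p = C p.leadingCoeff * X ^ m := by
      conv_lhs => rw [← eraseLead_add_monomial_natDegree_leadingCoeff p,
        eraseLead_eq_zero_of_natDegree_le_natTrailingDegree (by omega)]
      rw [zero_add, hd, C_mul_X_pow_eq_monomial]
    rwa [hlead, ← smul_eq_C_mul, Submodule.smul_mem_iff _ (leadingCoeff_ne_zero.mpr hp0)] at hp
  · have htd : p.natTrailingDegree < p.natDegree := by omega
    have herase0 : p.eraseLead ≠ 0 := by
      intro h0
      have := congrArg natTrailingDegree (eraseLead_add_monomial_natDegree_leadingCoeff p)
      rw [h0, zero_add, natTrailingDegree_monomial (leadingCoeff_ne_zero.mpr hp0)] at this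
      omega
    have hdeg : p.eraseLead.natDegree < d := by
      rcases p.eraseLead_natDegree_lt_or_eraseLead_eq_zero with h | h
      · exact hd ▸ h
      · exact absurd h herase0
    exact ih _ hdeg (eraseLead_mem hp (hd ▸ hU d ⟨p, hp, hp0, hd⟩ hlt)) herase0
      (natTrailingDegree_eraseLead htd ▸ hm) rfl

theorem X_pow_mem_of_degreeSet_subset (hbdd : BddAbove (degreeSet U))
    (h : degreeSet U ⊆ trailingDegreeSet U) : ∀ m ∈ degreeSet U, X ^ m ∈ U := by
  intro m
  induction m using Nat.strong_decreasing_induction with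
  | base =>
    obtain ⟨b, hb⟩ := hbdd
    exact ⟨b, fun m hm hmS => absurd (hb hmS) (not_le.mpr hm)⟩
  | step m ih =>
    intro hm
    obtain ⟨p, hp, hp0, hpm⟩ := h hm
    exact X_pow_mem_of_natTrailingDegree_eq (fun d hd hmd => ih d hmd hd) hp hp0 hpm

end Field

end Polynomial

/-- a `k`-dimensional subspace `U ⊆ P_n` is spanned by monomials iff its
`0`-pivot sequence equals its `∞`-pivot sequence, i.e. the set of orders at `0` of
nonzero elements of `U` coincides with the set of degrees of nonzero elements of `U`. -/
theorem monomial_subspace_iff_pivots_match (k n : ℕ) (U : Submodule ℂ (Polynomial ℂ))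
    (hUn : U ≤ Polynomial.degreeLE ℂ (n : ℕ)) (hdim : Module.finrank ℂ U = k) :
    (∃ μ : Fin k → ℕ,
        U = Submodule.span ℂ (Set.range fun i : Fin k => (X : Polynomial ℂ) ^ μ i)) ↔
      {m : ℕ | ∃ q ∈ U, q ≠ 0 ∧ Polynomial.rootMultiplicity 0 q = m} =
        {m : ℕ | ∃ q ∈ U, q ≠ 0 ∧ q.natDegree = m} := by
  have hrange {k : ℕ} (μ : Fin k → ℕ) :
      Submodule.span ℂ (Set.range fun i => (X : ℂ[X]) ^ μ i) = monomialSpan ℂ (Set.range μ) := by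
    rw [monomialSpan, ← Set.range_comp]
    rfl
  simp only [rootMultiplicity_eq_natTrailingDegree']
  change _ ↔ trailingDegreeSet U = degreeSet U
  constructor
  · rintro ⟨μ, rfl⟩
    rw [hrange, trailingDegreeSet_monomialSpan, degreeSet_monomialSpan]
  · intro h
    have hX := X_pow_mem_of_degreeSet_subset (bddAbove_Iic.mono (degreeSet_subset_Iic hUn)) h.ge
    obtain ⟨T, hT⟩ := ((Set.finite_Iic n).subset (degreeSet_subset_Iic hUn)).exists_finset_coe
    have hUT : U = monomialSpan ℂ T := hT ▸ eq_monomialSpan_degreeSet hX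
    have hk : T.card = k := by rw [← hdim, hUT, finrank_monomialSpan]
    refine ⟨T.orderEmbOfFin hk, ?_⟩
    rw [hUT, hrange, Finset.range_orderEmbOfFin]
end
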